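/- arXiv:2509.10954 — 5 statements merged into one kernel-verified Lean document; each statement's English description precedes it below -/
import Mathlib

section
/- Let n ≥ 2, d ≥ 1, and let a₀, …, a_n be constants with a₀ > 0, a_n > 0 and a_i ≥ 0. Let γ : [0,1] × [0,1] → ℝ^d be such that for every t ∈ [0,1] the curve γ(t,·) is an immersion of class H^n and ∂_tγ(t,·) exists and is of class H^n, and let φ : [0,1] → [0,1] be a C¹ diffeomorphism of [0,1] onto itself, of class H^n, with φ' nowhere zero. Then the reparametrized path γ.φ, defined by (γ.φ)(t,θ) := γ(t, φ(θ)), satisfies len(γ.φ) = len(γ). -/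
open MeasureTheory Set Filter
open scoped Topology

noncomputable section

variable {F : Type*} [NormedAddCommGroup F] [NormedSpace ℝ F]

/-- Arc-length derivative `∇ₛ f = (∂_θ f)/|c'|` of `f` with respect to the base curve `c`. -/
def arcDeriv (c f : ℝ → F) : ℝ → F := fun θ => (‖deriv c θ‖)⁻¹ • deriv f θ

/-- Iterated arc-length derivative `∇ₛ^i f` with respect to the base curve `c`. -/
def arcIter (c : ℝ → F) : ℕ → (ℝ → F) → ℝ → F
  | 0, f => f
  | i + 1, f => arcDeriv c (arcIter c i f)

/-- A curve `c : [0,1] → F` is an immersion: it is `C¹` and `c' θ ≠ 0` for all `θ ∈ [0,1]`. -/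
def IsImmersion (c : ℝ → F) : Prop :=
  ContDiffOn ℝ 1 c (Icc (0:ℝ) 1) ∧ ∀ θ ∈ Icc (0:ℝ) 1, deriv c θ ≠ 0

/-- `f : [0,1] → F` is of class `H^m` (`m ≥ 1`): it is `C^{m-1}` and its `(m-1)`-st derivative
is the primitive of an `L²` function `g` (the weak `m`-th derivative). -/
def IsHclass (m : ℕ) (f : ℝ → F) : Prop :=
  ContDiffOn ℝ (m - 1 : ℕ) f (Icc (0:ℝ) 1) ∧
  ∃ g : ℝ → F, IntervalIntegrable g volume 0 1 ∧
    IntervalIntegrable (fun u => ‖g u‖ ^ 2) volume 0 1 ∧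
    ∀ x ∈ Icc (0:ℝ) 1,
      iteratedDeriv (m - 1) f x = iteratedDeriv (m - 1) f 0 + ∫ u in (0:ℝ)..x, g u

/-- Squared `L²(ds)` norm of `f` with respect to the base curve `c`. -/
def L2ds (c f : ℝ → F) : ℝ := ∫ θ in (0:ℝ)..1, ‖f θ‖ ^ 2 * ‖deriv c θ‖

/-- The Sobolev metric `G_c(h,h) = Σ_{i=0}^n a_i ‖∇ₛ^i h‖²_{L²(ds)}`. -/
def sobolevG (n : ℕ) (a : ℕ → ℝ) (c h : ℝ → F) : ℝ :=
  ∑ i ∈ Finset.range (n + 1), a i * L2ds c (arcIter c i h)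

/-- The velocity `∂_t γ(t,·)` of a path of curves. -/
def tderiv (γ : ℝ → ℝ → F) (t : ℝ) : ℝ → F := fun θ => deriv (fun s => γ s θ) t

/-- Riemannian length of a path of curves `γ : [0,1] → Imm([0,1],F)` for the Sobolev metric. -/
def pathLen (n : ℕ) (a : ℕ → ℝ) (γ : ℝ → ℝ → F) : ℝ :=
  ∫ t in (0:ℝ)..1, Real.sqrt (sobolevG n a (γ t) (tderiv γ t))

/-- Euclidean space `ℝ^d`. -/
abbrev Euc (d : ℕ) := EuclideanSpace ℝ (Fin d)

lemma aux_deriv_const_smul_ne {c : ℝ} (hc : c ≠ 0) (f : ℝ → F) (x : ℝ) :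
    deriv (fun y => c • f y) x = c • deriv f x := by
  by_cases hf : DifferentiableAt ℝ f x
  · exact deriv_const_smul c hf
  · have h2 : ¬ DifferentiableAt ℝ (fun y => c • f y) x := by
      intro h
      have := h.const_smul c⁻¹
      simp only [Pi.smul_def, smul_smul, inv_mul_cancel₀ hc, one_smul] at this
      exact hf this
    rw [deriv_zero_of_not_differentiableAt hf, deriv_zero_of_not_differentiableAt h2, smul_zero]

lemma aux_deriv_comp_chain {φ : ℝ → ℝ} {θ : ℝ} (g : ℝ → F)
    (hφ : HasStrictDerivAt φ (deriv φ θ) θ) (hφ' : deriv φ θ ≠ 0) :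
    deriv (fun x => g (φ x)) θ = deriv φ θ • deriv g (φ θ) := by
  by_cases hg : DifferentiableAt ℝ g (φ θ)
  · exact (HasDerivAt.scomp θ hg.hasDerivAt hφ.hasDerivAt).deriv
  · have h2 : ¬ DifferentiableAt ℝ (fun x => g (φ x)) θ := by
      intro hcomp
      apply hg
      have hψ : HasStrictDerivAt (hφ.localInverse φ _ θ hφ') (deriv φ θ)⁻¹ (φ θ) :=
        hφ.to_localInverse hφ'
      have hev : ∀ᶠ y in 𝓝 (φ θ), φ (hφ.localInverse φ _ θ hφ' y) = y :=
        (hφ.hasStrictFDerivAt_equiv hφ').eventually_right_inverse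
      have hθ0 : hφ.localInverse φ _ θ hφ' (φ θ) = θ :=
        (hφ.hasStrictFDerivAt_equiv hφ').localInverse_apply_image
      have hd : DifferentiableAt ℝ (fun y => g (φ (hφ.localInverse φ _ θ hφ' y))) (φ θ) := by
        rw [← hθ0] at hcomp
        have := hcomp.comp (φ θ) hψ.hasDerivAt.differentiableAt
        exact this
      refine hd.congr_of_eventuallyEq ?_
      filter_upwards [hev] with y hy
      simp [hy]
    rw [deriv_zero_of_not_differentiableAt hg, deriv_zero_of_not_differentiableAt h2, smul_zero]

lemma aux_arcIter_comp {φ : ℝ → ℝ} (c h : ℝ → F)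
    (hφ : ∀ θ ∈ Ioo (0:ℝ) 1, HasStrictDerivAt φ (deriv φ θ) θ)
    (hφ' : ∀ θ ∈ Ioo (0:ℝ) 1, deriv φ θ ≠ 0)
    (ε : ℝ) (hε : ε = 1 ∨ ε = -1)
    (hsgn : ∀ θ ∈ Ioo (0:ℝ) 1, |deriv φ θ| = ε * deriv φ θ) :
    ∀ k, ∀ θ ∈ Ioo (0:ℝ) 1,
      arcIter (fun x => c (φ x)) k (fun x => h (φ x)) θ = ε ^ k • arcIter c k h (φ θ) := by
  have hεne : ε ≠ 0 := by rcases hε with h|h <;> simp [h]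
  have hε2 : ε * ε = 1 := by rcases hε with h|h <;> simp [h]
  intro k
  induction k with
  | zero => intro θ _; simp [arcIter]
  | succ k ih =>
    intro θ hθ
    have hnb : Ioo (0:ℝ) 1 ∈ 𝓝 θ := isOpen_Ioo.mem_nhds hθ
    have hev : arcIter (fun x => c (φ x)) k (fun x => h (φ x)) =ᶠ[𝓝 θ]
        (fun x => ε ^ k • arcIter c k h (φ x)) :=
      eventually_of_mem hnb (fun x hx => ih x hx)
    have ht := hφ' θ hθ
    have hst := hsgn θ hθ
    have habs : |deriv φ θ|⁻¹ * deriv φ θ = ε := by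
      rw [hst, mul_inv, mul_assoc, inv_mul_cancel₀ ht, mul_one, inv_eq_of_mul_eq_one_left hε2]
    show arcDeriv (fun x => c (φ x)) (arcIter (fun x => c (φ x)) k (fun x => h (φ x))) θ
        = ε ^ (k+1) • arcDeriv c (arcIter c k h) (φ θ)
    rw [arcDeriv, arcDeriv, hev.deriv_eq, aux_deriv_const_smul_ne (pow_ne_zero _ hεne),
        aux_deriv_comp_chain (arcIter c k h) (hφ θ hθ) ht,
        aux_deriv_comp_chain c (hφ θ hθ) ht, norm_smul, Real.norm_eq_abs,
        smul_smul, smul_smul, smul_smul]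
    congr 1
    rw [mul_inv]
    calc |deriv φ θ|⁻¹ * ‖deriv c (φ θ)‖⁻¹ * ε ^ k * deriv φ θ
        = ε ^ k * (|deriv φ θ|⁻¹ * deriv φ θ) * ‖deriv c (φ θ)‖⁻¹ := by ring
      _ = ε ^ (k+1) * ‖deriv c (φ θ)‖⁻¹ := by rw [habs]; ring

lemma aux_intervalIntegral_congr_Ioo {f g : ℝ → ℝ} (h : ∀ x ∈ Ioo (0:ℝ) 1, f x = g x) :
    ∫ x in (0:ℝ)..1, f x = ∫ x in (0:ℝ)..1, g x := by
  rw [intervalIntegral.integral_of_le zero_le_one, intervalIntegral.integral_of_le zero_le_one,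
      integral_Ioc_eq_integral_Ioo, integral_Ioc_eq_integral_Ioo]
  exact setIntegral_congr_fun measurableSet_Ioo h

lemma aux_integral_reparam (G : ℝ → ℝ) {φ : ℝ → ℝ}
    (hφ : ∀ θ ∈ Ioo (0:ℝ) 1, HasStrictDerivAt φ (deriv φ θ) θ)
    (hinj : InjOn φ (Ioo (0:ℝ) 1)) (himg : φ '' Ioo (0:ℝ) 1 = Ioo (0:ℝ) 1) :
    ∫ θ in (0:ℝ)..1, |deriv φ θ| * G (φ θ) = ∫ u in (0:ℝ)..1, G u := by
  rw [intervalIntegral.integral_of_le zero_le_one, intervalIntegral.integral_of_le zero_le_one,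
      integral_Ioc_eq_integral_Ioo, integral_Ioc_eq_integral_Ioo]
  have key := integral_image_eq_integral_abs_deriv_smul measurableSet_Ioo
      (fun x hx => ((hφ x hx).hasDerivAt).hasDerivWithinAt) hinj G
  rw [himg] at key
  simpa [smul_eq_mul] using key.symm

lemma aux_phi_pack (φ : ℝ → ℝ) (hφ1 : ContDiffOn ℝ 1 φ (Icc (0:ℝ) 1))
    (hφbij : BijOn φ (Icc (0:ℝ) 1) (Icc (0:ℝ) 1))
    (hφ' : ∀ θ ∈ Icc (0:ℝ) 1, deriv φ θ ≠ 0) :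
    ∃ ε : ℝ, (ε = 1 ∨ ε = -1) ∧ (∀ θ ∈ Ioo (0:ℝ) 1, |deriv φ θ| = ε * deriv φ θ) ∧
      φ '' Ioo (0:ℝ) 1 = Ioo (0:ℝ) 1 := by
  have hsub : Ioo (0:ℝ) 1 ⊆ Icc (0:ℝ) 1 := Ioo_subset_Icc_self
  have hcont : ContinuousOn (deriv φ) (Ioo (0:ℝ) 1) :=
    (hφ1.mono hsub).continuousOn_deriv_of_isOpen isOpen_Ioo le_rfl
  have h0m : (0:ℝ) ∈ Icc (0:ℝ) 1 := left_mem_Icc.mpr zero_le_one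
  have h1m : (1:ℝ) ∈ Icc (0:ℝ) 1 := right_mem_Icc.mpr zero_le_one
  have hdicho : (∀ θ ∈ Ioo (0:ℝ) 1, 0 < deriv φ θ) ∨ (∀ θ ∈ Ioo (0:ℝ) 1, deriv φ θ < 0) := by
    by_contra hcon
    push_neg at hcon
    obtain ⟨⟨θ₁, hθ₁, h1⟩, ⟨θ₂, hθ₂, h2⟩⟩ := hcon
    have h1' : deriv φ θ₁ < 0 := lt_of_le_of_ne h1 (hφ' θ₁ (hsub hθ₁))
    have h2' : 0 < deriv φ θ₂ := lt_of_le_of_ne h2 (Ne.symm (hφ' θ₂ (hsub hθ₂)))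
    have huicc : uIcc θ₁ θ₂ ⊆ Ioo (0:ℝ) 1 := (ordConnected_Ioo).uIcc_subset hθ₁ hθ₂
    have := intermediate_value_uIcc (hcont.mono huicc)
    have h0 : (0:ℝ) ∈ uIcc (deriv φ θ₁) (deriv φ θ₂) := by
      rw [Set.mem_uIcc]; left; exact ⟨h1'.le, h2'.le⟩
    obtain ⟨x, hx, hx0⟩ := this h0
    exact hφ' x (hsub (huicc hx)) hx0
  rcases hdicho with hpos | hneg
  · -- increasing case
    have hmono : StrictMonoOn φ (Icc (0:ℝ) 1) := by
      apply strictMonoOn_of_deriv_pos (convex_Icc 0 1) hφ1.continuousOn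
      intro x hx
      rw [interior_Icc] at hx
      exact hpos x hx
    have hφ0 : φ 0 = 0 := by
      obtain ⟨x, hx, hx0⟩ := hφbij.surjOn h0m
      have h1 : φ 0 ≤ φ x := hmono.monotoneOn h0m hx hx.1
      have h2 : φ 0 ∈ Icc (0:ℝ) 1 := hφbij.mapsTo h0m
      rw [hx0] at h1
      exact le_antisymm h1 h2.1
    have hφ1' : φ 1 = 1 := by
      obtain ⟨x, hx, hx1⟩ := hφbij.surjOn h1m
      have h1 : φ x ≤ φ 1 := hmono.monotoneOn hx h1m hx.2
      have h2 : φ 1 ∈ Icc (0:ℝ) 1 := hφbij.mapsTo h1m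
      rw [hx1] at h1
      exact le_antisymm h2.2 h1
    refine ⟨1, Or.inl rfl, fun θ hθ => by rw [abs_of_pos (hpos θ hθ), one_mul], ?_⟩
    apply Subset.antisymm
    · rintro _ ⟨x, hx, rfl⟩
      exact ⟨hφ0 ▸ hmono h0m (hsub hx) hx.1, hφ1' ▸ hmono (hsub hx) h1m hx.2⟩
    · intro y hy
      obtain ⟨x, hx, rfl⟩ := hφbij.surjOn (hsub hy)
      refine ⟨x, ⟨?_, ?_⟩, rfl⟩
      · rcases eq_or_lt_of_le hx.1 with h | h
        · exact absurd (show φ x = 0 by rw [← h, hφ0]) hy.1.ne'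
        · exact h
      · rcases eq_or_lt_of_le hx.2 with h | h
        · exact absurd (show φ x = 1 by rw [h, hφ1']) hy.2.ne
        · exact h
  · -- decreasing case
    have hmono : StrictAntiOn φ (Icc (0:ℝ) 1) := by
      apply strictAntiOn_of_deriv_neg (convex_Icc 0 1) hφ1.continuousOn
      intro x hx
      rw [interior_Icc] at hx
      exact hneg x hx
    have hφ0 : φ 0 = 1 := by
      obtain ⟨x, hx, hx1⟩ := hφbij.surjOn h1m
      have h1 : φ x ≤ φ 0 := hmono.antitoneOn h0m hx hx.1
      have h2 : φ 0 ∈ Icc (0:ℝ) 1 := hφbij.mapsTo h0m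
      rw [hx1] at h1
      exact le_antisymm h2.2 h1
    have hφ1' : φ 1 = 0 := by
      obtain ⟨x, hx, hx0⟩ := hφbij.surjOn h0m
      have h1 : φ 1 ≤ φ x := hmono.antitoneOn hx h1m hx.2
      have h2 : φ 1 ∈ Icc (0:ℝ) 1 := hφbij.mapsTo h1m
      rw [hx0] at h1
      exact le_antisymm h1 h2.1
    refine ⟨-1, Or.inr rfl, fun θ hθ => by rw [abs_of_neg (hneg θ hθ)]; ring, ?_⟩
    apply Subset.antisymm
    · rintro _ ⟨x, hx, rfl⟩
      exact ⟨hφ1' ▸ hmono (hsub hx) h1m hx.2, hφ0 ▸ hmono h0m (hsub hx) hx.1⟩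
    · intro y hy
      obtain ⟨x, hx, rfl⟩ := hφbij.surjOn (hsub hy)
      refine ⟨x, ⟨?_, ?_⟩, rfl⟩
      · rcases eq_or_lt_of_le hx.1 with h | h
        · exact absurd (show φ x = 1 by rw [← h, hφ0]) hy.2.ne
        · exact h
      · rcases eq_or_lt_of_le hx.2 with h | h
        · exact absurd (show φ x = 0 by rw [h, hφ1']) hy.1.ne'
        · exact h

/-- Reparametrization invariance of path length: if every curve `γ(t,·)` of a
path is an `H^n` immersion with `H^n` velocity `∂_tγ(t,·)`, and `φ` is an `H^n`-diffeomorphism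
of `[0,1]`, then the reparametrized path `(γ.φ)(t,θ) = γ(t, φ θ)` has the same length. -/
theorem statement_6 (d n : ℕ) (hd : 1 ≤ d) (hn : 2 ≤ n) (a : ℕ → ℝ)
    (ha0 : 0 < a 0) (han : 0 < a n) (ha : ∀ i ≤ n, 0 ≤ a i)
    (γ : ℝ → ℝ → Euc d)
    (hγimm : ∀ t ∈ Icc (0:ℝ) 1, IsImmersion (γ t))
    (hγH : ∀ t ∈ Icc (0:ℝ) 1, IsHclass n (γ t))
    (hγt : ∀ t ∈ Icc (0:ℝ) 1, ∀ θ ∈ Icc (0:ℝ) 1, DifferentiableAt ℝ (fun s => γ s θ) t)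
    (hγtH : ∀ t ∈ Icc (0:ℝ) 1, IsHclass n (tderiv γ t))
    (φ : ℝ → ℝ) (hφ1 : ContDiffOn ℝ 1 φ (Icc (0:ℝ) 1))
    (hφbij : BijOn φ (Icc (0:ℝ) 1) (Icc (0:ℝ) 1))
    (hφH : IsHclass n φ) (hφ' : ∀ θ ∈ Icc (0:ℝ) 1, deriv φ θ ≠ 0) :
    pathLen n a (fun t θ => γ t (φ θ)) = pathLen n a γ := by
  obtain ⟨ε, hε, hsgn, himg⟩ := aux_phi_pack φ hφ1 hφbij hφ'
  have hsub : Ioo (0:ℝ) 1 ⊆ Icc (0:ℝ) 1 := Ioo_subset_Icc_self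
  have hstrict : ∀ θ ∈ Ioo (0:ℝ) 1, HasStrictDerivAt φ (deriv φ θ) θ := fun θ hθ =>
    (hφ1.contDiffAt (Icc_mem_nhds hθ.1 hθ.2)).hasStrictDerivAt one_ne_zero
  have hφ'o : ∀ θ ∈ Ioo (0:ℝ) 1, deriv φ θ ≠ 0 := fun θ hθ => hφ' θ (hsub hθ)
  have hinj : InjOn φ (Ioo (0:ℝ) 1) := hφbij.injOn.mono hsub
  have habs : |ε| = 1 := by rcases hε with h | h <;> simp [h]
  have hL2 : ∀ (c h : ℝ → Euc d) (i : ℕ),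
      L2ds (fun θ => c (φ θ)) (arcIter (fun θ => c (φ θ)) i (fun θ => h (φ θ)))
        = L2ds c (arcIter c i h) := by
    intro c h i
    calc L2ds (fun θ => c (φ θ)) (arcIter (fun θ => c (φ θ)) i (fun θ => h (φ θ)))
        = ∫ θ in (0:ℝ)..1, |deriv φ θ| * (‖arcIter c i h (φ θ)‖ ^ 2 * ‖deriv c (φ θ)‖) := by
          apply aux_intervalIntegral_congr_Ioo
          intro θ hθ
          rw [aux_arcIter_comp c h hstrict hφ'o ε hε hsgn i θ hθ,
              aux_deriv_comp_chain c (hstrict θ hθ) (hφ'o θ hθ)]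
          simp only [norm_smul, Real.norm_eq_abs, abs_pow, habs, one_pow, one_mul]
          ring
      _ = ∫ u in (0:ℝ)..1, ‖arcIter c i h u‖ ^ 2 * ‖deriv c u‖ :=
          aux_integral_reparam (fun u => ‖arcIter c i h u‖ ^ 2 * ‖deriv c u‖) hstrict hinj himg
      _ = L2ds c (arcIter c i h) := rfl
  have hsob : ∀ t : ℝ, sobolevG n a (fun θ => γ t (φ θ)) (tderiv (fun t θ => γ t (φ θ)) t)
      = sobolevG n a (γ t) (tderiv γ t) := by
    intro t
    have htd : tderiv (fun t θ => γ t (φ θ)) t = fun θ => tderiv γ t (φ θ) := rfl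
    rw [htd, sobolevG, sobolevG]
    exact Finset.sum_congr rfl fun i _ => by rw [hL2 (γ t) (tderiv γ t) i]
  rw [pathLen, pathLen]
  apply intervalIntegral.integral_congr
  intro t _
  exact congrArg Real.sqrt (hsob t)
end
end

section
/- Let (φ_m)_{m=1}^∞ be a sequence of endpoint-fixing C¹ diffeomorphisms of [0,1] with φ_m' > 0 for every m. Suppose the sequence is Cauchy with respect to Δ, i.e., for every ε > 0 there exists N such that Δ(φ_m, φ_k) < ε for all m, k > N. Then there exists an endpoint-fixing C¹ diffeomorphism φ of [0,1] with φ' > 0 everywhere such that φ_m → φ in the C¹ norm, i.e., sup_{θ∈[0,1]} |φ_m(θ) − φ(θ)| + sup_{θ∈[0,1]} |φ_m'(θ) − φ'(θ)| → 0 as m → ∞. -/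
open MeasureTheory Set Filter

noncomputable section

/-- An endpoint-fixing `C¹` diffeomorphism of `[0,1]` with positive derivative. -/
def IsPDiffeo (φ : ℝ → ℝ) : Prop :=
  ContDiffOn ℝ 1 φ (Icc (0:ℝ) 1) ∧ BijOn φ (Icc (0:ℝ) 1) (Icc (0:ℝ) 1) ∧
    φ 0 = 0 ∧ φ 1 = 1 ∧ ∀ θ ∈ Icc (0:ℝ) 1, 0 < deriv φ θ

/-- `Δ(φ,ψ) = max_{θ₀,θ₁ ∈ [0,1]} |ln(φ'(θ₁)/ψ'(θ₁)) − ln(φ'(θ₀)/ψ'(θ₀))|`. -/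
def Delta (φ ψ : ℝ → ℝ) : ℝ :=
  ⨆ p : Icc (0:ℝ) 1 × Icc (0:ℝ) 1,
    |Real.log (deriv φ (p.2 : ℝ) / deriv ψ (p.2 : ℝ))
      - Real.log (deriv φ (p.1 : ℝ) / deriv ψ (p.1 : ℝ))|

namespace Statement11Aux

lemma aux_diffAt {φ : ℝ → ℝ} (h : IsPDiffeo φ) {θ : ℝ} (hθ : θ ∈ Icc (0:ℝ) 1) :
    DifferentiableAt ℝ φ θ :=
  differentiableAt_of_deriv_ne_zero (ne_of_gt (h.2.2.2.2 θ hθ))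

lemma aux_cont {φ : ℝ → ℝ} (h : IsPDiffeo φ) : ContinuousOn (deriv φ) (Icc (0:ℝ) 1) := by
  have hu : UniqueDiffOn ℝ (Icc (0:ℝ) 1) := uniqueDiffOn_Icc zero_lt_one
  refine (h.1.continuousOn_derivWithin hu le_rfl).congr ?_
  intro θ hθ
  exact ((aux_diffAt h hθ).derivWithin (hu θ hθ)).symm

lemma aux_logcont {φ : ℝ → ℝ} (h : IsPDiffeo φ) :
    ContinuousOn (fun θ => Real.log (deriv φ θ)) (Icc (0:ℝ) 1) := fun θ hθ =>
  (Real.continuousAt_log (ne_of_gt (h.2.2.2.2 θ hθ))).comp_continuousWithinAt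
    ((aux_cont h) θ hθ)

lemma aux_FTC {φ : ℝ → ℝ} (h : IsPDiffeo φ) {θ : ℝ} (hθ : θ ∈ Icc (0:ℝ) 1) :
    ∫ t in (0:ℝ)..θ, deriv φ t = φ θ := by
  have hsub : uIcc (0:ℝ) θ ⊆ Icc 0 1 := by
    rw [uIcc_of_le hθ.1]
    exact Icc_subset_Icc le_rfl hθ.2
  have h1 : ∀ x ∈ uIcc (0:ℝ) θ, HasDerivAt φ (deriv φ x) x := fun x hx =>
    (aux_diffAt h (hsub hx)).hasDerivAt
  have h2 : IntervalIntegrable (deriv φ) volume 0 θ :=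
    ((aux_cont h).mono hsub).intervalIntegrable
  rw [intervalIntegral.integral_eq_sub_of_hasDerivAt h1 h2, h.2.2.1, sub_zero]

lemma aux_int {φ : ℝ → ℝ} (h : IsPDiffeo φ) : IntervalIntegrable (deriv φ) volume 0 1 := by
  refine ((aux_cont h).mono ?_).intervalIntegrable
  rw [uIcc_of_le zero_le_one]

lemma aux_pos_int {φ₁ φ₂ : ℝ → ℝ} (h₁ : IsPDiffeo φ₁) (h₂ : IsPDiffeo φ₂)
    (hlt : ∀ θ ∈ Icc (0:ℝ) 1, deriv φ₂ θ < deriv φ₁ θ) : False := by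
  have hint : ∫ t in (0:ℝ)..1, (deriv φ₁ t - deriv φ₂ t) = 0 := by
    rw [intervalIntegral.integral_sub (aux_int h₁) (aux_int h₂),
      aux_FTC h₁ ⟨zero_le_one, le_rfl⟩, aux_FTC h₂ ⟨zero_le_one, le_rfl⟩,
      h₁.2.2.2.1, h₂.2.2.2.1, sub_self]
  have hpos : 0 < ∫ t in (0:ℝ)..1, (deriv φ₁ t - deriv φ₂ t) := by
    refine intervalIntegral.intervalIntegral_pos_of_pos_on
      ((aux_int h₁).sub (aux_int h₂)) (fun x hx => ?_) zero_lt_one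
    have hx' : x ∈ Icc (0:ℝ) 1 := ⟨le_of_lt hx.1, le_of_lt hx.2⟩
    have := hlt x hx'
    linarith
  linarith

lemma aux_exists_eq {φ₁ φ₂ : ℝ → ℝ} (h₁ : IsPDiffeo φ₁) (h₂ : IsPDiffeo φ₂) :
    ∃ θ ∈ Icc (0:ℝ) 1, deriv φ₁ θ = deriv φ₂ θ := by
  by_contra hcon
  push_neg at hcon
  set h : ℝ → ℝ := fun θ => deriv φ₁ θ - deriv φ₂ θ with hh
  have hc : ContinuousOn h (Icc (0:ℝ) 1) := (aux_cont h₁).sub (aux_cont h₂)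
  have hne : ∀ θ ∈ Icc (0:ℝ) 1, h θ ≠ 0 := fun θ hθ => sub_ne_zero.2 (hcon θ hθ)
  have hsign : (∀ θ ∈ Icc (0:ℝ) 1, 0 < h θ) ∨ (∀ θ ∈ Icc (0:ℝ) 1, h θ < 0) := by
    have h0mem : (0:ℝ) ∈ Icc (0:ℝ) 1 := ⟨le_rfl, zero_le_one⟩
    have : ∀ θ ∈ Icc (0:ℝ) 1, ∀ θ' ∈ Icc (0:ℝ) 1, 0 < h θ → h θ' < 0 → False := by
      intro θ hθ θ' hθ' hpos hneg
      have hsub : uIcc θ θ' ⊆ Icc (0:ℝ) 1 := uIcc_subset_Icc hθ hθ'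
      have hiv := intermediate_value_uIcc (hc.mono hsub)
      have h0 : (0:ℝ) ∈ uIcc (h θ) (h θ') := by
        rw [Set.mem_uIcc]
        right
        exact ⟨le_of_lt hneg, le_of_lt hpos⟩
      obtain ⟨c, hc1, hc2⟩ := hiv h0
      exact hne c (hsub hc1) hc2
    rcases lt_or_gt_of_ne (hne 0 h0mem) with h0neg | h0pos
    · right
      intro θ hθ
      by_contra hp
      push_neg at hp
      exact this θ hθ 0 h0mem (lt_of_le_of_ne hp (Ne.symm (hne θ hθ))) h0neg
    · left
      intro θ hθ
      by_contra hp
      push_neg at hp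
      exact this 0 h0mem θ hθ h0pos (lt_of_le_of_ne hp (hne θ hθ))
  rcases hsign with hs | hs
  · exact aux_pos_int h₁ h₂ (fun θ hθ => by have := hs θ hθ; simp only [hh] at this; linarith)
  · exact aux_pos_int h₂ h₁ (fun θ hθ => by have := hs θ hθ; simp only [hh] at this; linarith)

lemma aux_log_bound {φ : ℝ → ℝ} (h : IsPDiffeo φ) :
    ∃ B, ∀ θ ∈ Icc (0:ℝ) 1, |Real.log (deriv φ θ)| ≤ B := by
  obtain ⟨C, hC⟩ := isCompact_Icc.exists_bound_of_continuousOn (aux_logcont h)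
  exact ⟨C, fun θ hθ => by simpa [Real.norm_eq_abs] using hC θ hθ⟩

lemma aux_key {φ₁ φ₂ : ℝ → ℝ} (h₁ : IsPDiffeo φ₁) (h₂ : IsPDiffeo φ₂) {θ : ℝ}
    (hθ : θ ∈ Icc (0:ℝ) 1) :
    |Real.log (deriv φ₁ θ) - Real.log (deriv φ₂ θ)| ≤ Delta φ₁ φ₂ := by
  obtain ⟨θs, hθs, heq⟩ := aux_exists_eq h₁ h₂
  obtain ⟨B₁, hB₁⟩ := aux_log_bound h₁
  obtain ⟨B₂, hB₂⟩ := aux_log_bound h₂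
  have habs : ∀ q : Icc (0:ℝ) 1, |Real.log (deriv φ₁ (q:ℝ) / deriv φ₂ (q:ℝ))| ≤ B₁ + B₂ := by
    intro q
    rw [Real.log_div (ne_of_gt (h₁.2.2.2.2 _ q.2)) (ne_of_gt (h₂.2.2.2.2 _ q.2))]
    exact (abs_sub _ _).trans (add_le_add (hB₁ _ q.2) (hB₂ _ q.2))
  have hbdd : BddAbove (Set.range fun p : Icc (0:ℝ) 1 × Icc (0:ℝ) 1 =>
      |Real.log (deriv φ₁ (p.2 : ℝ) / deriv φ₂ (p.2 : ℝ))
        - Real.log (deriv φ₁ (p.1 : ℝ) / deriv φ₂ (p.1 : ℝ))|) := by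
    refine ⟨(B₁ + B₂) + (B₁ + B₂), ?_⟩
    rintro x ⟨p, rfl⟩
    exact (abs_sub _ _).trans (add_le_add (habs p.2) (habs p.1))
  have hle : |Real.log (deriv φ₁ θ / deriv φ₂ θ)
      - Real.log (deriv φ₁ θs / deriv φ₂ θs)| ≤ Delta φ₁ φ₂ :=
    le_ciSup hbdd (⟨θs, hθs⟩, ⟨θ, hθ⟩)
  rw [heq, div_self (ne_of_gt (h₂.2.2.2.2 _ hθs)), Real.log_one, sub_zero,
    Real.log_div (ne_of_gt (h₁.2.2.2.2 _ hθ)) (ne_of_gt (h₂.2.2.2.2 _ hθ))] at hle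
  exact hle

end Statement11Aux

open Statement11Aux

/-- A sequence of endpoint-fixing C¹ diffeomorphisms of [0,1] with positive
derivatives that is Cauchy with respect to Δ converges in the C¹ norm to an endpoint-fixing
C¹ diffeomorphism with everywhere positive derivative. -/
theorem statement_11 (φ : ℕ → ℝ → ℝ) (hφ : ∀ m, IsPDiffeo (φ m))
    (hcauchy : ∀ ε > (0:ℝ), ∃ N : ℕ, ∀ m > N, ∀ k > N, Delta (φ m) (φ k) < ε) :
    ∃ ψ : ℝ → ℝ, IsPDiffeo ψ ∧
      Tendsto (fun m =>
          (⨆ θ : Icc (0:ℝ) 1, |φ m (θ : ℝ) - ψ (θ : ℝ)|) +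
          (⨆ θ : Icc (0:ℝ) 1, |deriv (φ m) (θ : ℝ) - deriv ψ (θ : ℝ)|))
        atTop (nhds 0) := by
  haveI hne : Nonempty (Icc (0:ℝ) 1) := ⟨⟨0, le_rfl, zero_le_one⟩⟩
  -- the continuous maps θ ↦ log (φ_m' θ) on [0,1]
  set G : ℕ → C(Icc (0:ℝ) 1, ℝ) := fun m =>
    ⟨(Icc (0:ℝ) 1).restrict fun θ => Real.log (deriv (φ m) θ),
      ContinuousOn.restrict (aux_logcont (hφ m))⟩ with hG
  have hGapp : ∀ m (x : Icc (0:ℝ) 1), G m x = Real.log (deriv (φ m) (x : ℝ)) := fun m x => rfl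
  have hGcauchy : CauchySeq G := by
    rw [Metric.cauchySeq_iff]
    intro ε hε
    obtain ⟨N, hN⟩ := hcauchy (ε/2) (by linarith)
    refine ⟨N+1, fun m hm k hk => ?_⟩
    have hd : dist (G m) (G k) ≤ ε/2 := by
      rw [ContinuousMap.dist_le (by linarith)]
      intro x
      rw [Real.dist_eq, hGapp, hGapp]
      exact (aux_key (hφ m) (hφ k) x.2).trans (le_of_lt (hN m (by omega) k (by omega)))
    linarith
  obtain ⟨Glim, hGlim⟩ := cauchySeq_tendsto_of_complete hGcauchy
  set g : ℝ → ℝ := fun θ => Glim (projIcc 0 1 zero_le_one θ) with hgdef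
  have hg : Continuous g := Glim.continuous.comp continuous_projIcc
  have hgval : ∀ θ (hθ : θ ∈ Icc (0:ℝ) 1), g θ = Glim ⟨θ, hθ⟩ := by
    intro θ hθ
    simp [hgdef, projIcc_of_mem zero_le_one hθ]
  set flim : ℝ → ℝ := fun θ => Real.exp (g θ) with hflimdef
  have hflimc : Continuous flim := Real.continuous_exp.comp hg
  have hflimpos : ∀ θ, 0 < flim θ := fun θ => Real.exp_pos _
  set ψ : ℝ → ℝ := fun θ => ∫ t in (0:ℝ)..θ, flim t with hψdef
  have hψd : deriv ψ = flim := funext fun θ => Continuous.deriv_integral flim hflimc 0 θ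
  have hψdiff : Differentiable ℝ ψ := fun θ =>
    differentiableAt_of_deriv_ne_zero (by rw [hψd]; exact ne_of_gt (hflimpos θ))
  have hψc1 : ContDiff ℝ 1 ψ := contDiff_one_iff_deriv.2 ⟨hψdiff, by rw [hψd]; exact hflimc⟩
  have hψ0 : ψ 0 = 0 := intervalIntegral.integral_same
  -- uniform convergence of derivatives
  have hconv : ∀ ε > (0:ℝ), ∃ N, ∀ m ≥ N, ∀ θ ∈ Icc (0:ℝ) 1,
      |deriv (φ m) θ - flim θ| ≤ ε := by
    intro ε hε
    obtain ⟨C, hC⟩ := isCompact_Icc.exists_bound_of_continuousOn hflimc.continuousOn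
    set C' := max C 1 with hC'def
    have hC' : (0:ℝ) < C' := lt_of_lt_of_le one_pos (le_max_right _ _)
    have hCb : ∀ θ ∈ Icc (0:ℝ) 1, flim θ ≤ C' := fun θ hθ =>
      (le_abs_self _).trans ((hC θ hθ).trans (le_max_left _ _))
    set δ := Real.log (1 + ε / C') with hδdef
    have hεC : 0 < ε / C' := div_pos hε hC'
    have hδ : 0 < δ := Real.log_pos (by linarith)
    obtain ⟨N, hN⟩ := Metric.tendsto_atTop.1 hGlim δ hδ
    refine ⟨N, fun m hm θ hθ => ?_⟩
    have hdist : |Real.log (deriv (φ m) θ) - g θ| ≤ δ := by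
      have h1 : dist (G m ⟨θ, hθ⟩) (Glim ⟨θ, hθ⟩) ≤ dist (G m) Glim :=
        ContinuousMap.dist_apply_le_dist _
      have h2 := h1.trans (le_of_lt (hN m hm))
      rw [hgval θ hθ]
      rw [Real.dist_eq, hGapp] at h2
      exact h2
    set a := Real.log (deriv (φ m) θ) with hadef
    have hfm : deriv (φ m) θ = Real.exp a := (Real.exp_log ((hφ m).2.2.2.2 θ hθ)).symm
    have hxabs := abs_le.1 hdist
    have hkey : |Real.exp a - Real.exp (g θ)| ≤ Real.exp (g θ) * (Real.exp δ - 1) := by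
      have hexpand : Real.exp a - Real.exp (g θ)
          = Real.exp (g θ) * (Real.exp (a - g θ) - 1) := by
        rw [mul_sub, mul_one, ← Real.exp_add]
        ring_nf
      rw [hexpand, abs_mul, abs_of_pos (Real.exp_pos _)]
      have h2 : |Real.exp (a - g θ) - 1| ≤ Real.exp δ - 1 := by
        rcases le_or_gt 1 (Real.exp (a - g θ)) with h | h
        · rw [abs_of_nonneg (by linarith)]
          have := Real.exp_le_exp.2 ((le_abs_self _).trans hdist)
          linarith
        · rw [abs_of_neg (by linarith)]
          have h3 : Real.exp (-δ) ≤ Real.exp (a - g θ) := Real.exp_le_exp.2 (by linarith [hxabs.1])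
          have h4 : Real.exp (-δ) * Real.exp δ = 1 := by rw [← Real.exp_add]; simp
          nlinarith [Real.exp_pos δ, Real.exp_pos (-δ)]
      exact mul_le_mul_of_nonneg_left h2 (le_of_lt (Real.exp_pos _))
    have hδval : Real.exp δ - 1 = ε / C' := by
      rw [hδdef, Real.exp_log (by linarith)]
      ring
    calc |deriv (φ m) θ - flim θ| = |Real.exp a - Real.exp (g θ)| := by rw [hfm]
      _ ≤ Real.exp (g θ) * (Real.exp δ - 1) := hkey
      _ = flim θ * (ε / C') := by rw [hδval]
      _ ≤ C' * (ε / C') := mul_le_mul_of_nonneg_right (hCb θ hθ) (le_of_lt hεC)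
      _ = ε := by field_simp
  -- uniform convergence of the functions
  have hψval : ∀ m, ∀ θ ∈ Icc (0:ℝ) 1,
      φ m θ - ψ θ = ∫ t in (0:ℝ)..θ, (deriv (φ m) t - flim t) := by
    intro m θ hθ
    have hsub : uIcc (0:ℝ) θ ⊆ Icc 0 1 := by
      rw [uIcc_of_le hθ.1]
      exact Icc_subset_Icc le_rfl hθ.2
    rw [intervalIntegral.integral_sub (((aux_cont (hφ m)).mono hsub).intervalIntegrable)
      (hflimc.intervalIntegrable 0 θ), aux_FTC (hφ m) hθ]
  have hest : ∀ ε > (0:ℝ), ∃ N, ∀ m ≥ N, ∀ θ ∈ Icc (0:ℝ) 1, |φ m θ - ψ θ| ≤ ε := by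
    intro ε hε
    obtain ⟨N, hN⟩ := hconv ε hε
    refine ⟨N, fun m hm θ hθ => ?_⟩
    rw [hψval m θ hθ]
    have hb : ∀ x ∈ Set.uIoc (0:ℝ) θ, ‖deriv (φ m) x - flim x‖ ≤ ε := by
      intro x hx
      rw [uIoc_of_le hθ.1] at hx
      exact hN m hm x ⟨le_of_lt hx.1, hx.2.trans hθ.2⟩
    have := intervalIntegral.norm_integral_le_of_norm_le_const hb
    rw [Real.norm_eq_abs] at this
    refine this.trans ?_
    have : |θ - 0| ≤ 1 := by rw [sub_zero, abs_of_nonneg hθ.1]; exact hθ.2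
    nlinarith
  have hψ1 : ψ 1 = 1 := by
    have hall : ∀ ε > (0:ℝ), |ψ 1 - 1| ≤ ε := by
      intro ε hε
      obtain ⟨N, hN⟩ := hest ε hε
      have := hN N le_rfl 1 ⟨zero_le_one, le_rfl⟩
      rw [(hφ N).2.2.2.1] at this
      rwa [abs_sub_comm] at this
    have h0 : |ψ 1 - 1| ≤ 0 := le_of_forall_pos_le_add (by simpa using fun ε hε => hall ε hε)
    have := abs_eq_zero.1 (le_antisymm h0 (abs_nonneg _))
    linarith
  -- ψ is a positive diffeomorphism
  have hψcont : ContinuousOn ψ (Icc (0:ℝ) 1) := hψc1.continuous.continuousOn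
  have hmono : StrictMonoOn ψ (Icc (0:ℝ) 1) :=
    strictMonoOn_of_deriv_pos (convex_Icc 0 1) hψcont
      (fun x _ => by rw [hψd]; exact hflimpos x)
  have hbij : BijOn ψ (Icc (0:ℝ) 1) (Icc (0:ℝ) 1) := by
    refine ⟨fun θ hθ => ?_, hmono.injOn, ?_⟩
    · constructor
      · rw [← hψ0]
        exact hmono.monotoneOn ⟨le_rfl, zero_le_one⟩ hθ hθ.1
      · rw [← hψ1]
        exact hmono.monotoneOn hθ ⟨zero_le_one, le_rfl⟩ hθ.2
    · have := intermediate_value_Icc zero_le_one hψcont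
      rw [hψ0, hψ1] at this
      exact this
  have hψP : IsPDiffeo ψ :=
    ⟨hψc1.contDiffOn, hbij, hψ0, hψ1, fun θ _ => by rw [hψd]; exact hflimpos θ⟩
  refine ⟨ψ, hψP, ?_⟩
  rw [Metric.tendsto_atTop]
  intro ε hε
  obtain ⟨N₁, hN₁⟩ := hest (ε/3) (by linarith)
  obtain ⟨N₂, hN₂⟩ := hconv (ε/3) (by linarith)
  refine ⟨max N₁ N₂, fun m hm => ?_⟩
  have h1 : (⨆ θ : Icc (0:ℝ) 1, |φ m (θ : ℝ) - ψ (θ : ℝ)|) ≤ ε/3 :=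
    ciSup_le fun θ => hN₁ m (le_trans (le_max_left _ _) hm) θ θ.2
  have h2 : (⨆ θ : Icc (0:ℝ) 1, |deriv (φ m) (θ : ℝ) - deriv ψ (θ : ℝ)|) ≤ ε/3 :=
    ciSup_le fun θ => by rw [hψd]; exact hN₂ m (le_trans (le_max_right _ _) hm) θ θ.2
  have h1' : 0 ≤ ⨆ θ : Icc (0:ℝ) 1, |φ m (θ : ℝ) - ψ (θ : ℝ)| :=
    Real.iSup_nonneg fun θ => abs_nonneg _
  have h2' : 0 ≤ ⨆ θ : Icc (0:ℝ) 1, |deriv (φ m) (θ : ℝ) - deriv ψ (θ : ℝ)| :=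
    Real.iSup_nonneg fun θ => abs_nonneg _
  rw [Real.dist_eq, sub_zero, abs_of_nonneg (add_nonneg h1' h2')]
  linarith
end
end

section
/- Take d = 2, n = 2 and a₀ = a₁ = a₂ = 1. The path γ(t,θ) := t·(cos(tθ), sin(tθ)) for t ∈ (0,1] consists of immersed curves, and its length is infinite: ∫₀¹ √(Σ_{i=0}^2 ‖∇_s^i ∂_tγ(t,·)‖²_{L²(ds)}) dt = ∞. (This shows the bound α < 1/(2n−3) in the shortening–shrinking construction is sharp, since here α = 1 = 1/(2·2−3) and c(θ) = (cos θ, sin θ) is smooth.) -/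
open MeasureTheory Set Filter

noncomputable section

variable {F : Type*} [NormedAddCommGroup F] [NormedSpace ℝ F]

/-- The unit circle curve `θ ↦ (cos θ, sin θ)` in `ℝ²`. -/
def circ : ℝ → Euc 2 :=
  fun θ => (EuclideanSpace.equiv (Fin 2) ℝ).symm ![Real.cos θ, Real.sin θ]


namespace Stmt13

open Real

noncomputable def vv (a b : ℝ) : Euc 2 :=
  (EuclideanSpace.equiv (Fin 2) ℝ).symm ![a, b]

lemma vv_add (a b c d : ℝ) : vv a b + vv c d = vv (a+c) (b+d) := by
  simp only [vv, ← map_add]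
  congr 1
  funext i; fin_cases i <;> simp

lemma vv_smul (r a b : ℝ) : r • vv a b = vv (r*a) (r*b) := by
  simp only [vv, ← _root_.map_smul]
  congr 1
  funext i; fin_cases i <;> simp

lemma norm_vv_sq (a b : ℝ) : ‖vv a b‖^2 = a^2 + b^2 := by
  rw [show ‖vv a b‖ = Real.sqrt (∑ i, ‖(vv a b) i‖^2) from EuclideanSpace.norm_eq _]
  rw [Real.sq_sqrt (by positivity)]
  simp [vv, Fin.sum_univ_two, sq_abs]

lemma vv_split (a b : ℝ) : vv a b = a • vv 1 0 + b • vv 0 1 := by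
  rw [vv_smul, vv_smul, vv_add]; norm_num

lemma hasDerivAt_vv {f g : ℝ → ℝ} {f' g' : ℝ} {x : ℝ}
    (hf : HasDerivAt f f' x) (hg : HasDerivAt g g' x) :
    HasDerivAt (fun θ => vv (f θ) (g θ)) (vv f' g') x := by
  have h := (hf.smul_const (vv 1 0)).add (hg.smul_const (vv 0 1))
  have e : (fun θ => vv (f θ) (g θ)) = fun θ => f θ • vv 1 0 + g θ • vv 0 1 :=
    funext fun θ => vv_split _ _
  rw [e, vv_split f' g']
  exact h

lemma continuous_vv {f g : ℝ → ℝ} (hf : Continuous f) (hg : Continuous g) :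
    Continuous (fun θ => vv (f θ) (g θ)) := by
  have e : (fun θ => vv (f θ) (g θ)) = fun θ => f θ • vv 1 0 + g θ • vv 0 1 :=
    funext fun θ => vv_split _ _
  rw [e]
  exact (hf.smul continuous_const).add (hg.smul continuous_const)

lemma circ_eq (θ : ℝ) : circ θ = vv (Real.cos θ) (Real.sin θ) := rfl

lemma hd_cos (a x : ℝ) : HasDerivAt (fun θ : ℝ => Real.cos (a*θ)) (-(a * Real.sin (a*x))) x := by
  have h := (Real.hasDerivAt_cos (a*x)).comp x ((hasDerivAt_id x).const_mul a)
  exact h.congr_deriv (by ring)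

lemma hd_sin (a x : ℝ) : HasDerivAt (fun θ : ℝ => Real.sin (a*θ)) (a * Real.cos (a*x)) x := by
  have h := (Real.hasDerivAt_sin (a*x)).comp x ((hasDerivAt_id x).const_mul a)
  exact h.congr_deriv (by ring)

lemma cfun_eq (t : ℝ) :
    (fun θ => t • circ (t*θ)) = fun θ => vv (t * Real.cos (t*θ)) (t * Real.sin (t*θ)) :=
  funext fun θ => vv_smul t _ _

lemma hasDeriv_c (t θ : ℝ) :
    HasDerivAt (fun θ => t • circ (t * θ))
      (vv (-(t^2 * Real.sin (t*θ))) (t^2 * Real.cos (t*θ))) θ := by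
  rw [cfun_eq]
  have h := hasDerivAt_vv ((hd_cos t θ).const_mul t) ((hd_sin t θ).const_mul t)
  convert h using 2 <;> ring

lemma norm_deriv_c (t θ : ℝ) :
    ‖deriv (fun θ => t • circ (t * θ)) θ‖ = t^2 := by
  rw [(hasDeriv_c t θ).deriv]
  have h2 : ‖vv (-(t^2 * Real.sin (t*θ))) (t^2 * Real.cos (t*θ))‖^2 = (t^2)^2 := by
    rw [norm_vv_sq]
    nlinarith [Real.sin_sq_add_cos_sq (t*θ)]
  calc ‖vv (-(t^2 * Real.sin (t*θ))) (t^2 * Real.cos (t*θ))‖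
      = Real.sqrt (‖vv (-(t^2 * Real.sin (t*θ))) (t^2 * Real.cos (t*θ))‖^2) :=
        (Real.sqrt_sq (norm_nonneg _)).symm
    _ = Real.sqrt ((t^2)^2) := by rw [h2]
    _ = t^2 := Real.sqrt_sq (sq_nonneg t)

/-- The velocity field `h = ∂_t γ`. -/
noncomputable def hfun (t θ : ℝ) : Euc 2 :=
  vv (Real.cos (t*θ) - t*θ*Real.sin (t*θ)) (Real.sin (t*θ) + t*θ*Real.cos (t*θ))

lemma tderiv_eq (t : ℝ) : tderiv (fun s θ => s • circ (s*θ)) t = hfun t := by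
  funext θ
  show deriv (fun s => s • circ (s*θ)) t = hfun t θ
  have e : (fun s : ℝ => s • circ (s*θ)) = fun s => vv (s * Real.cos (s*θ)) (s * Real.sin (s*θ)) :=
    funext fun s => vv_smul s _ _
  have h1 : HasDerivAt (fun s : ℝ => s * Real.cos (s*θ))
      (1 * Real.cos (t*θ) + t * (-Real.sin (t*θ) * θ)) t :=
    (hasDerivAt_id t).mul (by have := (Real.hasDerivAt_cos (t*θ)).comp t (hasDerivAt_mul_const θ); exact this)
  have h2 : HasDerivAt (fun s : ℝ => s * Real.sin (s*θ))
      (1 * Real.sin (t*θ) + t * (Real.cos (t*θ) * θ)) t :=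
    (hasDerivAt_id t).mul (by have := (Real.hasDerivAt_sin (t*θ)).comp t (hasDerivAt_mul_const θ); exact this)
  have h : HasDerivAt (fun s => vv (s * Real.cos (s*θ)) (s * Real.sin (s*θ))) (hfun t θ) t := by
    have h3 := hasDerivAt_vv h1 h2
    unfold hfun
    convert h3 using 2 <;> ring
  rw [e]
  exact h.deriv

/-- First arc derivative `∇ₛ h`. -/
noncomputable def g1 (t θ : ℝ) : Euc 2 :=
  vv ((t^2)⁻¹ * (-(2*t*Real.sin (t*θ)) - t^2*θ*Real.cos (t*θ)))
     ((t^2)⁻¹ * (2*t*Real.cos (t*θ) - t^2*θ*Real.sin (t*θ)))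

/-- Second arc derivative `∇ₛ² h`. -/
noncomputable def g2 (t θ : ℝ) : Euc 2 :=
  vv ((t^2)⁻¹ * ((t^2)⁻¹ * (-(3*t^2*Real.cos (t*θ)) + t^3*θ*Real.sin (t*θ))))
     ((t^2)⁻¹ * ((t^2)⁻¹ * (-(3*t^2*Real.sin (t*θ)) - t^3*θ*Real.cos (t*θ))))

lemma hd_tθ (t x : ℝ) : HasDerivAt (fun θ : ℝ => t * θ) t x := by
  simpa using (hasDerivAt_id x).const_mul t

lemma hasDeriv_hfun (t θ : ℝ) :
    HasDerivAt (hfun t)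
      (vv (-(2*t*Real.sin (t*θ)) - t^2*θ*Real.cos (t*θ))
          (2*t*Real.cos (t*θ) - t^2*θ*Real.sin (t*θ))) θ := by
  have h1 : HasDerivAt (fun θ : ℝ => Real.cos (t*θ) - t*θ*Real.sin (t*θ))
      (-(t * Real.sin (t*θ)) - (t * Real.sin (t*θ) + (t*θ) * (t * Real.cos (t*θ)))) θ :=
    (hd_cos t θ).sub ((hd_tθ t θ).mul (hd_sin t θ))
  have h2 : HasDerivAt (fun θ : ℝ => Real.sin (t*θ) + t*θ*Real.cos (t*θ))
      (t * Real.cos (t*θ) + (t * Real.cos (t*θ) + (t*θ) * (-(t * Real.sin (t*θ))))) θ :=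
    (hd_sin t θ).add ((hd_tθ t θ).mul (hd_cos t θ))
  have h := hasDerivAt_vv h1 h2
  unfold hfun
  convert h using 2 <;> ring

lemma arc1 (t : ℝ) :
    arcDeriv (fun θ => t • circ (t * θ)) (hfun t) = g1 t := by
  funext θ
  show (‖deriv (fun θ => t • circ (t * θ)) θ‖)⁻¹ • deriv (hfun t) θ = g1 t θ
  rw [(hasDeriv_c t θ).deriv, (hasDeriv_hfun t θ).deriv]
  have hn : ‖vv (-(t^2 * Real.sin (t*θ))) (t^2 * Real.cos (t*θ))‖ = t^2 := by
    have := (hasDeriv_c t θ).deriv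
    rw [← this]; exact norm_deriv_c t θ
  rw [hn, vv_smul]
  rfl

lemma hasDeriv_g1 (t θ : ℝ) :
    HasDerivAt (g1 t)
      (vv ((t^2)⁻¹ * (-(3*t^2*Real.cos (t*θ)) + t^3*θ*Real.sin (t*θ)))
          ((t^2)⁻¹ * (-(3*t^2*Real.sin (t*θ)) - t^3*θ*Real.cos (t*θ)))) θ := by
  have h1 : HasDerivAt (fun θ : ℝ => -(2*t*Real.sin (t*θ)) - t^2*θ*Real.cos (t*θ))
      (-(2*t*(t * Real.cos (t*θ))) - (t^2 * Real.cos (t*θ) + (t^2*θ) * (-(t * Real.sin (t*θ))))) θ := by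
    have ha : HasDerivAt (fun θ : ℝ => 2*t*Real.sin (t*θ)) (2*t*(t * Real.cos (t*θ))) θ :=
      (hd_sin t θ).const_mul (2*t)
    have hb : HasDerivAt (fun θ : ℝ => t^2*θ) (t^2) θ := hd_tθ (t^2) θ
    exact ha.neg.sub (hb.mul (hd_cos t θ))
  have h2 : HasDerivAt (fun θ : ℝ => 2*t*Real.cos (t*θ) - t^2*θ*Real.sin (t*θ))
      (2*t*(-(t * Real.sin (t*θ))) - (t^2 * Real.sin (t*θ) + (t^2*θ) * (t * Real.cos (t*θ)))) θ := by
    have ha : HasDerivAt (fun θ : ℝ => 2*t*Real.cos (t*θ)) (2*t*(-(t * Real.sin (t*θ)))) θ :=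
      (hd_cos t θ).const_mul (2*t)
    have hb : HasDerivAt (fun θ : ℝ => t^2*θ) (t^2) θ := hd_tθ (t^2) θ
    exact ha.sub (hb.mul (hd_sin t θ))
  have h := hasDerivAt_vv (h1.const_mul ((t^2)⁻¹)) (h2.const_mul ((t^2)⁻¹))
  unfold g1 at h ⊢
  convert h using 2 <;> ring

lemma arc2 (t : ℝ) :
    arcDeriv (fun θ => t • circ (t * θ)) (g1 t) = g2 t := by
  funext θ
  show (‖deriv (fun θ => t • circ (t * θ)) θ‖)⁻¹ • deriv (g1 t) θ = g2 t θ
  rw [(hasDeriv_c t θ).deriv, (hasDeriv_g1 t θ).deriv]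
  have hn : ‖vv (-(t^2 * Real.sin (t*θ))) (t^2 * Real.cos (t*θ))‖ = t^2 := by
    rw [← (hasDeriv_c t θ).deriv]; exact norm_deriv_c t θ
  rw [hn, vv_smul]
  rfl

lemma norm_g2_sq {t : ℝ} (ht : 0 < t) (θ : ℝ) :
    ‖g2 t θ‖^2 = 9/t^4 + θ^2/t^2 := by
  unfold g2
  rw [norm_vv_sq]
  have hs := Real.sin_sq_add_cos_sq (t*θ)
  have ht4 : t^4 ≠ 0 := by positivity
  field_simp
  linear_combination (9 + t^2*θ^2) * hs

lemma continuous_g2 (t : ℝ) : Continuous (g2 t) := by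
  unfold g2
  apply continuous_vv <;> fun_prop

lemma L2ds_nonneg (c f : ℝ → Euc 2) : 0 ≤ L2ds c f :=
  intervalIntegral.integral_nonneg zero_le_one (fun u _ => by positivity)

lemma L2ds_g2_lower {t : ℝ} (ht : 0 < t) :
    9/t^2 ≤ L2ds (fun θ => t • circ (t * θ)) (g2 t) := by
  have e : (fun θ => ‖g2 t θ‖^2 * ‖deriv (fun θ => t • circ (t * θ)) θ‖)
      = fun θ => (9/t^4 + θ^2/t^2) * t^2 := by
    funext θ; rw [norm_g2_sq ht, norm_deriv_c]
  rw [L2ds, e]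
  have hint : IntervalIntegrable (fun θ : ℝ => (9/t^4 + θ^2/t^2) * t^2) volume 0 1 :=
    (by fun_prop : Continuous fun θ : ℝ => (9/t^4 + θ^2/t^2) * t^2).intervalIntegrable 0 1
  have hconst : IntervalIntegrable (fun _ : ℝ => 9/t^2) volume 0 1 :=
    intervalIntegrable_const
  have hmono : ∀ x ∈ Icc (0:ℝ) 1, 9/t^2 ≤ (9/t^4 + x^2/t^2) * t^2 := by
    intro x _
    have h1 : (9/t^4 + x^2/t^2) * t^2 = 9/t^2 + x^2 := by field_simp
    nlinarith [sq_nonneg x]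
  calc 9/t^2 = ∫ _ in (0:ℝ)..1, (9/t^2 : ℝ) := by simp
    _ ≤ _ := intervalIntegral.integral_mono_on zero_le_one hconst hint hmono

lemma sobolev_lower {t : ℝ} (ht : 0 < t) :
    9/t^2 ≤ sobolevG 2 (fun _ => 1) (fun θ => t • circ (t * θ))
      (tderiv (fun s θ => s • circ (s * θ)) t) := by
  rw [tderiv_eq]
  set c := fun θ => t • circ (t * θ) with hc
  have hexp : sobolevG 2 (fun _ => 1) c (hfun t)
      = L2ds c (hfun t) + L2ds c (g1 t) + L2ds c (g2 t) := by
    rw [sobolevG, Finset.sum_range_succ, Finset.sum_range_succ, Finset.sum_range_one]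
    simp only [one_mul]
    rw [show arcIter c 1 (hfun t) = arcDeriv c (hfun t) from rfl,
      show arcIter c 2 (hfun t) = arcDeriv c (arcDeriv c (hfun t)) from rfl,
      show arcIter c 0 (hfun t) = hfun t from rfl, arc1 t, arc2 t]
  rw [hexp]
  have h0 := L2ds_nonneg c (hfun t)
  have h1 := L2ds_nonneg c (g1 t)
  have h2 := L2ds_g2_lower ht
  linarith

lemma top_lintegral : (∫⁻ t in Ioc (0:ℝ) 1, ENNReal.ofReal (3/t)) = ⊤ := by
  by_contra hne
  have hmeas : AEMeasurable (fun t : ℝ => 3/t) (volume.restrict (Ioc 0 1)) :=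
    (measurable_const.div measurable_id).aemeasurable
  have hpos : 0 ≤ᵐ[volume.restrict (Ioc (0:ℝ) 1)] fun t => 3/t := by
    rw [Filter.EventuallyLE, ae_restrict_iff' measurableSet_Ioc]
    filter_upwards with t htm
    exact le_of_lt (div_pos (by norm_num) htm.1)
  have hfin : HasFiniteIntegral (fun t : ℝ => 3/t) (volume.restrict (Ioc 0 1)) := by
    rw [hasFiniteIntegral_iff_ofReal hpos]
    exact lt_top_iff_ne_top.2 hne
  have hInt : IntegrableOn (fun t : ℝ => 3/t) (Ioc 0 1) :=
    ⟨hmeas.aestronglyMeasurable, hfin⟩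
  have hInt2 : IntegrableOn (fun t : ℝ => t ^ (-1:ℝ)) (Ioo (0:ℝ) 1) := by
    have h3 : IntegrableOn (fun x : ℝ => (1/3) * (3/x)) (Ioo (0:ℝ) 1) :=
      (hInt.mono_set Ioo_subset_Ioc_self).const_mul (1/3)
    apply h3.congr_fun ?_ measurableSet_Ioo
    intro x hx
    show (1:ℝ)/3 * (3/x) = x ^ (-1:ℝ)
    rw [Real.rpow_neg_one]
    field_simp
  rw [intervalIntegral.integrableOn_Ioo_rpow_iff zero_lt_one] at hInt2
  linarith

theorem statement_13' :
    (∀ t ∈ Ioc (0:ℝ) 1, IsImmersion (fun θ => t • circ (t * θ))) ∧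
    (∫⁻ t in Ioc (0:ℝ) 1, ENNReal.ofReal (Real.sqrt
        (sobolevG 2 (fun _ => 1) (fun θ => t • circ (t * θ))
          (tderiv (fun s θ => s • circ (s * θ)) t)))) = ⊤ := by
  constructor
  · rintro t ⟨ht, _⟩
    constructor
    · rw [cfun_eq t]
      apply ContDiff.contDiffOn
      have e : (fun θ => vv (t * Real.cos (t*θ)) (t * Real.sin (t*θ)))
          = fun θ : ℝ => (t * Real.cos (t*θ)) • vv 1 0 + (t * Real.sin (t*θ)) • vv 0 1 :=
        funext fun θ => vv_split _ _
      rw [e]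
      have hcos : ContDiff ℝ 1 (fun θ : ℝ => t * Real.cos (t*θ)) :=
        contDiff_const.mul (Real.contDiff_cos.comp (contDiff_const.mul contDiff_id))
      have hsin : ContDiff ℝ 1 (fun θ : ℝ => t * Real.sin (t*θ)) :=
        contDiff_const.mul (Real.contDiff_sin.comp (contDiff_const.mul contDiff_id))
      exact (hcos.smul contDiff_const).add (hsin.smul contDiff_const)
    · intro θ _
      intro h0
      have hn := norm_deriv_c t θ
      rw [h0, norm_zero] at hn
      nlinarith
  · rw [eq_top_iff, ← top_lintegral]
    refine setLIntegral_mono' measurableSet_Ioc ?_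
    intro t htmem
    apply ENNReal.ofReal_le_ofReal
    have ht : 0 < t := htmem.1
    rw [show (3:ℝ)/t = Real.sqrt ((3/t)^2) from (Real.sqrt_sq (by positivity)).symm]
    apply Real.sqrt_le_sqrt
    have := sobolev_lower ht
    have h9 : (3/t)^2 = 9/t^2 := by field_simp; ring
    linarith

end Stmt13

/-- For `d = 2`, `n = 2`, `a₀ = a₁ = a₂ = 1`, the path
`γ(t,θ) = t·(cos(tθ), sin(tθ))`, `t ∈ (0,1]`, consists of immersed curves but has infinite
length; hence the bound `α < 1/(2n−3)` of the shortening–shrinking construction is sharp. -/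
theorem statement_13 :
    (∀ t ∈ Ioc (0:ℝ) 1, IsImmersion (fun θ => t • circ (t * θ))) ∧
    (∫⁻ t in Ioc (0:ℝ) 1, ENNReal.ofReal (Real.sqrt
        (sobolevG 2 (fun _ => 1) (fun θ => t • circ (t * θ))
          (tderiv (fun s θ => s • circ (s * θ)) t)))) = ⊤ := by
  exact Stmt13.statement_13'
end
end

section
/- Let n ≥ 2, d ≥ 1, let 0 ≤ α < 1/(2n−3), and let a₀, …, a_n be constants with a₀ > 0, a_n > 0, a_i ≥ 0. Let c : [0,1] → ℝ^d be a constant-speed immersion of length ℓ_c > 0 (|c'(θ)| = ℓ_c for all θ) of class H^{n+1}. For each t ∈ (0,1] consider the path γ^t(τ,θ) := t^{ατ}·c(tθ), τ ∈ [0,1], connecting the curve θ ↦ c(tθ) to the curve θ ↦ t^α·c(tθ). Then each γ^t(τ,·) is an immersion and len(γ^t) → 0 as t → 0⁺. -/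
open MeasureTheory Set Filter

noncomputable section

variable {F : Type*} [NormedAddCommGroup F] [NormedSpace ℝ F]

section Aux

lemma aux_hasDerivAt_base {c : ℝ → F} {t b θ : ℝ} (hdc : DifferentiableAt ℝ c (t * θ)) :
    HasDerivAt (fun θ => b • c (t * θ)) ((b * t) • deriv c (t * θ)) θ := by
  have h1 : HasDerivAt (fun θ : ℝ => t * θ) t θ := by
    simpa using (hasDerivAt_id θ).const_mul t
  have h2 : HasDerivAt (fun θ : ℝ => c (t * θ)) (t • deriv c (t * θ)) θ := by
    simpa [Function.comp_def] using HasDerivAt.scomp θ hdc.hasDerivAt h1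
  have h3 : HasDerivAt (fun θ => b • c (t * θ)) (b • t • deriv c (t * θ)) θ := h2.const_smul b
  rw [smul_smul] at h3
  exact h3

lemma aux_tderiv_eq {c : ℝ → F} {t : ℝ} (ht : 0 < t) (α τ θ : ℝ) :
    tderiv (fun τ θ => t ^ (α * τ) • c (t * θ)) τ θ
      = (α * Real.log t * t ^ (α * τ)) • c (t * θ) := by
  have hrw : ∀ s : ℝ, t ^ (α * s) = Real.exp (Real.log t * α * s) := by
    intro s; rw [Real.rpow_def_of_pos ht]; ring_nf
  have h2 : HasDerivAt (fun s : ℝ => Real.log t * α * s) (Real.log t * α) τ := by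
    simpa using (hasDerivAt_id τ).const_mul (Real.log t * α)
  have h3 := (h2.exp).smul_const (c (t * θ))
  have h4 : HasDerivAt (fun s : ℝ => t ^ (α * s) • c (t * θ))
      ((α * Real.log t * t ^ (α * τ)) • c (t * θ)) τ := by
    simp only [hrw]
    convert h3 using 2
    rw [← hrw]; ring
  exact h4.deriv

lemma aux_iterWithin_eq (i : ℕ) (f : ℝ → F) {x : ℝ} (hx : Icc (0:ℝ) 1 ∈ nhds x) :
    iteratedDerivWithin i f (Icc (0:ℝ) 1) x = iteratedDeriv i f x := by
  rw [iteratedDerivWithin_eq_iteratedFDerivWithin, iteratedDeriv_eq_iteratedFDeriv,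
    ← iteratedFDerivWithin_univ, ← univ_inter (Icc (0:ℝ) 1),
    iteratedFDerivWithin_inter hx]


lemma aux_arcIter_eq {c : ℝ → F} {n : ℕ} {ℓ α t τ : ℝ} (hℓ : 0 < ℓ)
    (ht0 : 0 < t) (ht1 : t < 1) (hn : 0 < n)
    (hspeed : ∀ θ ∈ Icc (0:ℝ) 1, ‖deriv c θ‖ = ℓ)
    (hdiff : ∀ i < n, ∀ x ∈ Ioo (0:ℝ) 1, DifferentiableAt ℝ (iteratedDeriv i c) x) :
    ∀ i ≤ n, ∀ θ ∈ Ioo (0:ℝ) (1/t),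
      arcIter (fun θ => t ^ (α * τ) • c (t * θ)) i
        (tderiv (fun τ θ => t ^ (α * τ) • c (t * θ)) τ) θ
      = ((α * Real.log t * t ^ (α * τ * (1 - (i:ℝ)))) / ℓ ^ i) • iteratedDeriv i c (t * θ) := by
  intro i
  induction i with
  | zero =>
    intro _ θ hθ
    simp [arcIter, aux_tderiv_eq ht0, iteratedDeriv_zero]
  | succ i IH =>
    intro hi θ hθ
    have hi' : i < n := lt_of_lt_of_le (Nat.lt_succ_self i) hi
    have hmem : t * θ ∈ Ioo (0:ℝ) 1 := by
      refine ⟨mul_pos ht0 hθ.1, ?_⟩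
      have h := (mul_lt_mul_iff_right₀ ht0).2 hθ.2
      rwa [mul_one_div, div_self (ne_of_gt ht0)] at h
    have hdc : DifferentiableAt ℝ c (t * θ) := by
      have := hdiff 0 hn (t * θ) hmem
      simpa [iteratedDeriv_zero] using this
    have hbase := aux_hasDerivAt_base (b := t ^ (α * τ)) hdc
    have hpos : (0:ℝ) < t ^ (α * τ) * t := mul_pos (Real.rpow_pos_of_pos ht0 _) ht0
    have hnorm : ‖deriv (fun θ => t ^ (α * τ) • c (t * θ)) θ‖ = t ^ (α * τ) * t * ℓ := by
      rw [hbase.deriv, norm_smul, Real.norm_eq_abs, abs_of_pos hpos,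
        hspeed (t * θ) (Ioo_subset_Icc_self hmem)]
    have hev : arcIter (fun θ => t ^ (α * τ) • c (t * θ)) i
        (tderiv (fun τ θ => t ^ (α * τ) • c (t * θ)) τ) =ᶠ[nhds θ]
        (fun θ => ((α * Real.log t * t ^ (α * τ * (1 - (i:ℝ)))) / ℓ ^ i) •
          iteratedDeriv i c (t * θ)) :=
      eventually_of_mem (isOpen_Ioo.mem_nhds hθ) (fun x hx => IH (le_of_lt hi') x hx)
    have hD := aux_hasDerivAt_base (b := (α * Real.log t * t ^ (α * τ * (1 - (i:ℝ)))) / ℓ ^ i)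
      (hdiff i hi' (t * θ) hmem)
    show arcDeriv _ _ θ = _
    rw [arcDeriv]
    rw [hnorm, hev.deriv_eq, hD.deriv, ← iteratedDeriv_succ, smul_smul]
    congr 1
    have h1 : t ^ (α * τ * (1 - ((i:ℕ)+1:ℝ))) = t ^ (α * τ * (1 - (i:ℝ))) / t ^ (α * τ) := by
      rw [← Real.rpow_sub ht0]; congr 1; ring
    have hne1 : t ^ (α * τ) ≠ 0 := ne_of_gt (Real.rpow_pos_of_pos ht0 _)
    have hne2 : (ℓ:ℝ) ≠ 0 := ne_of_gt hℓ
    have hne3 : t ≠ 0 := ne_of_gt ht0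
    push_cast
    rw [h1]
    field_simp
    ring

end Aux


set_option maxHeartbeats 2000000 in
/-- For `0 ≤ α < 1/(2n−3)` and a constant-speed immersion `c` of length
`ℓ > 0` of class `H^{n+1}`, the paths `γ^t(τ,θ) = t^{ατ} • c(tθ)` (joining `c(t·)` to
`t^α • c(t·)`) consist of immersions and `len(γ^t) → 0` as `t → 0⁺`. -/
theorem statement_15 (d n : ℕ) (hd : 1 ≤ d) (hn : 2 ≤ n) (α : ℝ)
    (hα0 : 0 ≤ α) (hα : α < 1 / (2 * (n : ℝ) - 3)) (a : ℕ → ℝ)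
    (ha0 : 0 < a 0) (han : 0 < a n) (ha : ∀ i ≤ n, 0 ≤ a i)
    (c : ℝ → Euc d) (ℓ : ℝ) (hℓ : 0 < ℓ)
    (hc : IsImmersion c) (hcH : IsHclass (n + 1) c)
    (hspeed : ∀ θ ∈ Icc (0:ℝ) 1, ‖deriv c θ‖ = ℓ) :
    (∀ t ∈ Ioc (0:ℝ) 1, ∀ τ ∈ Icc (0:ℝ) 1,
      IsImmersion (fun θ => t ^ (α * τ) • c (t * θ))) ∧
    Tendsto (fun t : ℝ => pathLen n a (fun τ θ => t ^ (α * τ) • c (t * θ)))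
      (nhdsWithin 0 (Ioi 0)) (nhds 0) := by
  obtain ⟨hcC1, hcne⟩ := hc
  have himm : ∀ t ∈ Ioc (0:ℝ) 1, ∀ τ ∈ Icc (0:ℝ) 1,
      IsImmersion (fun θ => t ^ (α * τ) • c (t * θ)) := by
    intro t ht τ hτ
    have hmap : ∀ θ ∈ Icc (0:ℝ) 1, t * θ ∈ Icc (0:ℝ) 1 := fun θ hθ =>
      ⟨mul_nonneg (le_of_lt ht.1) hθ.1, mul_le_one₀ ht.2 hθ.1 hθ.2⟩
    constructor
    · have hcomp : ContDiffOn ℝ 1 (fun θ => c (t * θ)) (Icc (0:ℝ) 1) := by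
        apply ContDiffOn.comp hcC1 ((contDiff_const.mul contDiff_id).contDiffOn)
        intro θ hθ
        exact hmap θ hθ
      exact hcomp.const_smul _
    · intro θ hθ
      have hmem := hmap θ hθ
      have hdc : DifferentiableAt ℝ c (t * θ) := by
        by_contra h
        exact hcne _ hmem (deriv_zero_of_not_differentiableAt h)
      rw [(aux_hasDerivAt_base (b := t ^ (α * τ)) hdc).deriv]
      exact smul_ne_zero (ne_of_gt (mul_pos (Real.rpow_pos_of_pos ht.1 _) ht.1)) (hcne _ hmem)
  refine ⟨himm, ?_⟩
  have hn0 : 0 < n := by omega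
  have hn3 : (0:ℝ) < 2 * (n:ℝ) - 3 := by
    have h2n : (2:ℝ) ≤ (n:ℝ) := by exact_mod_cast hn
    linarith
  have hαn : α * (2 * (n:ℝ) - 3) < 1 := by
    have := (lt_div_iff₀ hn3).mp hα
    linarith
  set δ : ℝ := (1 - α * (2 * (n:ℝ) - 3)) / 2 with hδdef
  have hδ : 0 < δ := by rw [hδdef]; linarith
  have hcn : ContDiffOn ℝ n c (Icc (0:ℝ) 1) := by
    have h := hcH.1
    simpa using h
  have hud : UniqueDiffOn ℝ (Icc (0:ℝ) 1) := uniqueDiffOn_Icc one_pos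
  have hdiff : ∀ i < n, ∀ x ∈ Ioo (0:ℝ) 1, DifferentiableAt ℝ (iteratedDeriv i c) x := by
    intro i hi x hx
    have hnx : Icc (0:ℝ) 1 ∈ nhds x := Icc_mem_nhds hx.1 hx.2
    have h1 : DifferentiableWithinAt ℝ (iteratedDerivWithin i c (Icc (0:ℝ) 1)) (Icc (0:ℝ) 1) x :=
      (hcn.differentiableOn_iteratedDerivWithin (by exact_mod_cast hi) hud) x
        (Ioo_subset_Icc_self hx)
    have h2 : DifferentiableAt ℝ (iteratedDerivWithin i c (Icc (0:ℝ) 1)) x :=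
      h1.differentiableAt hnx
    apply h2.congr_of_eventuallyEq
    filter_upwards [isOpen_Ioo.mem_nhds hx] with y hy
    exact (aux_iterWithin_eq i c (Icc_mem_nhds hy.1 hy.2)).symm
  have hMex : ∃ M : ℝ, 0 ≤ M ∧ ∀ i ≤ n, ∀ x ∈ Ioo (0:ℝ) 1, ‖iteratedDeriv i c x‖ ≤ M := by
    have hbd : ∀ i ≤ n, ∃ Mi : ℝ, ∀ x ∈ Icc (0:ℝ) 1,
        ‖iteratedDerivWithin i c (Icc (0:ℝ) 1) x‖ ≤ Mi := by
      intro i hi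
      exact (isCompact_Icc).exists_bound_of_continuousOn
        (hcn.continuousOn_iteratedDerivWithin (by exact_mod_cast hi) hud)
    choose! Mi hMi using hbd
    refine ⟨∑ i ∈ Finset.range (n+1), max (Mi i) 0, ?_, ?_⟩
    · exact Finset.sum_nonneg fun i _ => le_max_right _ _
    · intro i hi x hx
      rw [← aux_iterWithin_eq i c (Icc_mem_nhds hx.1 hx.2)]
      calc ‖iteratedDerivWithin i c (Icc (0:ℝ) 1) x‖ ≤ Mi i :=
            hMi i hi x (Ioo_subset_Icc_self hx)
        _ ≤ max (Mi i) 0 := le_max_left _ _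
        _ ≤ ∑ i ∈ Finset.range (n+1), max (Mi i) 0 :=
            Finset.single_le_sum (f := fun i => max (Mi i) 0)
              (fun j _ => le_max_right _ _) (Finset.mem_range.mpr (Nat.lt_succ_of_le hi))
  obtain ⟨M, hM0, hMb⟩ := hMex
  set R : ℝ := ∑ i ∈ Finset.range (n+1), a i * (M^2 * (ℓ / ℓ ^ (2*i))) with hRdef
  have hR0 : 0 ≤ R := by
    apply Finset.sum_nonneg
    intro i hi
    have hai := ha i (Nat.lt_succ_iff.mp (Finset.mem_range.mp hi))
    have : 0 ≤ M^2 * (ℓ / ℓ ^ (2*i)) := by positivity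
    exact mul_nonneg hai this
  have key : ∀ t ∈ Ioo (0:ℝ) 1,
      ‖pathLen n a (fun τ θ => t ^ (α * τ) • c (t * θ))‖ ≤
        Real.sqrt R * (α * (-Real.log t * t ^ δ)) := by
    intro t ht
    obtain ⟨ht0, ht1⟩ := ht
    have hlog : Real.log t < 0 := Real.log_neg ht0 ht1
    set P : ℝ := α * (-Real.log t * t ^ δ) with hPdef
    have hP0 : 0 ≤ P := by
      apply mul_nonneg hα0
      apply mul_nonneg (by linarith)
      exact le_of_lt (Real.rpow_pos_of_pos ht0 _)
    have hP2 : P^2 = (α * Real.log t)^2 * t ^ (2*δ) := by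
      rw [hPdef, show (2:ℝ)*δ = δ + δ by ring, Real.rpow_add ht0]
      ring
    have hG : ∀ τ ∈ Ioc (0:ℝ) 1,
        Real.sqrt (sobolevG n a (fun θ => t ^ (α * τ) • c (t * θ))
          (tderiv (fun τ θ => t ^ (α * τ) • c (t * θ)) τ)) ≤ Real.sqrt R * P := by
      intro τ hτ
      have hτ0 : 0 ≤ τ := le_of_lt hτ.1
      have hτ1 : τ ≤ 1 := hτ.2
      have harc := aux_arcIter_eq (τ := τ) (α := α) hℓ ht0 ht1 hn0 hspeed hdiff
      have hGle : sobolevG n a (fun θ => t ^ (α * τ) • c (t * θ))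
          (tderiv (fun τ θ => t ^ (α * τ) • c (t * θ)) τ) ≤ P^2 * R := by
        rw [sobolevG, hRdef, Finset.mul_sum]
        apply Finset.sum_le_sum
        intro i hiR
        have hi : i ≤ n := Nat.lt_succ_iff.mp (Finset.mem_range.mp hiR)
        have hai := ha i hi
        set Ki : ℝ := (α * Real.log t * t ^ (α * τ * (1 - (i:ℝ)))) / ℓ ^ i with hKidef
        set v : ℝ := t ^ (α * τ) * t * ℓ with hvdef
        have hv0 : 0 < v := mul_pos (mul_pos (Real.rpow_pos_of_pos ht0 _) ht0) hℓ
        have hb : ∀ θ ∈ Set.uIoc (0:ℝ) 1,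
            ‖‖arcIter (fun θ => t ^ (α * τ) • c (t * θ)) i
                (tderiv (fun τ θ => t ^ (α * τ) • c (t * θ)) τ) θ‖^2 *
              ‖deriv (fun θ => t ^ (α * τ) • c (t * θ)) θ‖‖ ≤ Ki^2 * M^2 * v := by
          intro θ hθ
          rw [Set.uIoc_of_le zero_le_one] at hθ
          have hθ' : θ ∈ Ioo (0:ℝ) (1/t) :=
            ⟨hθ.1, lt_of_le_of_lt hθ.2 (one_lt_one_div ht0 ht1)⟩
          have hmem : t * θ ∈ Ioo (0:ℝ) 1 := by
            refine ⟨mul_pos ht0 hθ'.1, ?_⟩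
            have h := (mul_lt_mul_iff_right₀ ht0).2 hθ'.2
            rwa [mul_one_div, div_self (ne_of_gt ht0)] at h
          have hdc : DifferentiableAt ℝ c (t * θ) := by
            have := hdiff 0 hn0 (t * θ) hmem
            simpa [iteratedDeriv_zero] using this
          have hnorm : ‖deriv (fun θ => t ^ (α * τ) • c (t * θ)) θ‖ = v := by
            rw [(aux_hasDerivAt_base (b := t ^ (α * τ)) hdc).deriv, norm_smul,
              Real.norm_eq_abs,
              abs_of_pos (mul_pos (Real.rpow_pos_of_pos ht0 (α * τ)) ht0),
              hspeed (t * θ) (Ioo_subset_Icc_self hmem), hvdef]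
          have hnf : ‖arcIter (fun θ => t ^ (α * τ) • c (t * θ)) i
              (tderiv (fun τ θ => t ^ (α * τ) • c (t * θ)) τ) θ‖ ≤ |Ki| * M := by
            rw [harc i hi θ hθ', norm_smul, Real.norm_eq_abs]
            exact mul_le_mul_of_nonneg_left (hMb i hi (t * θ) hmem) (abs_nonneg _)
          rw [hnorm, Real.norm_eq_abs, abs_of_nonneg
            (mul_nonneg (pow_nonneg (norm_nonneg _) 2) (le_of_lt hv0))]
          have h2 : ‖arcIter (fun θ => t ^ (α * τ) • c (t * θ)) i
              (tderiv (fun τ θ => t ^ (α * τ) • c (t * θ)) τ) θ‖^2 ≤ (|Ki| * M)^2 :=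
            pow_le_pow_left₀ (norm_nonneg _) hnf 2
          calc _ ≤ (|Ki| * M)^2 * v :=
                mul_le_mul_of_nonneg_right h2 (le_of_lt hv0)
            _ = Ki^2 * M^2 * v := by rw [mul_pow, sq_abs]
        have hL2 : L2ds (fun θ => t ^ (α * τ) • c (t * θ))
            (arcIter (fun θ => t ^ (α * τ) • c (t * θ)) i
              (tderiv (fun τ θ => t ^ (α * τ) • c (t * θ)) τ)) ≤ Ki^2 * M^2 * v := by
          have hni := intervalIntegral.norm_integral_le_of_norm_le_const hb
          rw [L2ds]
          refine le_trans (le_abs_self _) ?_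
          rw [← Real.norm_eq_abs]
          calc ‖∫ θ in (0:ℝ)..1, ‖arcIter (fun θ => t ^ (α * τ) • c (t * θ)) i
                  (tderiv (fun τ θ => t ^ (α * τ) • c (t * θ)) τ) θ‖^2 *
                ‖deriv (fun θ => t ^ (α * τ) • c (t * θ)) θ‖‖
              ≤ Ki^2 * M^2 * v * |1 - 0| := hni
            _ = Ki^2 * M^2 * v := by norm_num
        have hexp : 2*δ ≤ 2*(α * τ * (1 - (i:ℝ))) + α * τ + 1 := by
          have hiℝ : (i:ℝ) ≤ (n:ℝ) := by exact_mod_cast hi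
          have hmain : α * τ * (2*(i:ℝ) - 3) ≤ α * (2*(n:ℝ) - 3) := by
            rcases le_total (2*(i:ℝ) - 3) 0 with h | h
            · have h1 : α * τ * (2*(i:ℝ) - 3) ≤ 0 :=
                mul_nonpos_of_nonneg_of_nonpos (mul_nonneg hα0 hτ0) h
              have h2 : 0 ≤ α * (2*(n:ℝ) - 3) := mul_nonneg hα0 (le_of_lt hn3)
              linarith
            · have h1 : τ * (2*(i:ℝ) - 3) ≤ 2*(n:ℝ) - 3 := by nlinarith
              have h3 := mul_le_mul_of_nonneg_left h1 hα0
              linarith [h3]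
          have hδ2 : 2*δ = 1 - α * (2*(n:ℝ) - 3) := by rw [hδdef]; ring
          rw [hδ2]
          nlinarith [hmain]
        have hKiv : Ki^2 * v ≤ (α * Real.log t)^2 * t ^ (2*δ) * (ℓ / ℓ ^ (2*i)) := by
          have heq : Ki^2 * v = (α * Real.log t)^2 *
              t ^ (2*(α * τ * (1 - (i:ℝ))) + α * τ + 1) * (ℓ / ℓ ^ (2*i)) := by
            rw [hKidef, hvdef]
            rw [show 2*(α * τ * (1 - (i:ℝ))) + α * τ + 1
                = (α * τ * (1 - (i:ℝ)) + α * τ * (1 - (i:ℝ))) + α * τ + 1 by ring,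
              Real.rpow_add ht0, Real.rpow_add ht0, Real.rpow_add ht0, Real.rpow_one,
              show 2*i = i*2 by ring, pow_mul]
            have hℓne : (ℓ:ℝ) ≠ 0 := ne_of_gt hℓ
            have hℓine : (ℓ:ℝ)^i ≠ 0 := pow_ne_zero _ hℓne
            field_simp
          rw [heq]
          have hle : t ^ (2*(α * τ * (1 - (i:ℝ))) + α * τ + 1) ≤ t ^ (2*δ) :=
            Real.rpow_le_rpow_of_exponent_ge ht0 (le_of_lt ht1) hexp
          have hfac2 : (0:ℝ) ≤ ℓ / ℓ ^ (2*i) := by positivity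
          apply mul_le_mul_of_nonneg_right _ hfac2
          exact mul_le_mul_of_nonneg_left hle (sq_nonneg _)
        calc a i * L2ds (fun θ => t ^ (α * τ) • c (t * θ))
              (arcIter (fun θ => t ^ (α * τ) • c (t * θ)) i
                (tderiv (fun τ θ => t ^ (α * τ) • c (t * θ)) τ))
            ≤ a i * (Ki^2 * M^2 * v) := mul_le_mul_of_nonneg_left hL2 hai
          _ = a i * (Ki^2 * v) * M^2 := by ring
          _ ≤ a i * ((α * Real.log t)^2 * t ^ (2*δ) * (ℓ / ℓ ^ (2*i))) * M^2 := by
              apply mul_le_mul_of_nonneg_right _ (sq_nonneg M)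
              exact mul_le_mul_of_nonneg_left hKiv hai
          _ = P^2 * (a i * (M^2 * (ℓ / ℓ ^ (2*i)))) := by rw [hP2]; ring
      calc Real.sqrt (sobolevG n a (fun θ => t ^ (α * τ) • c (t * θ))
            (tderiv (fun τ θ => t ^ (α * τ) • c (t * θ)) τ))
          ≤ Real.sqrt (P^2 * R) := Real.sqrt_le_sqrt hGle
        _ = P * Real.sqrt R := by
            rw [Real.sqrt_mul (sq_nonneg P), Real.sqrt_sq hP0]
        _ = Real.sqrt R * P := mul_comm _ _
    have hb2 : ∀ τ ∈ Set.uIoc (0:ℝ) 1,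
        ‖Real.sqrt (sobolevG n a (fun θ => t ^ (α * τ) • c (t * θ))
          (tderiv (fun τ θ => t ^ (α * τ) • c (t * θ)) τ))‖ ≤ Real.sqrt R * P := by
      intro τ hτ
      rw [Set.uIoc_of_le zero_le_one] at hτ
      rw [Real.norm_eq_abs, abs_of_nonneg (Real.sqrt_nonneg _)]
      exact hG τ hτ
    have hni2 := intervalIntegral.norm_integral_le_of_norm_le_const hb2
    rw [pathLen]
    calc ‖∫ τ in (0:ℝ)..1, Real.sqrt (sobolevG n a (fun θ => t ^ (α * τ) • c (t * θ))
            (tderiv (fun τ θ => t ^ (α * τ) • c (t * θ)) τ))‖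
        ≤ Real.sqrt R * P * |1 - 0| := hni2
      _ = Real.sqrt R * P := by norm_num
  have htend : Tendsto (fun t : ℝ => Real.sqrt R * (α * (-Real.log t * t ^ δ)))
      (nhdsWithin 0 (Ioi 0)) (nhds 0) := by
    have h0 := tendsto_log_mul_rpow_nhdsGT_zero hδ
    have h1 : Tendsto (fun t : ℝ => -Real.log t * t ^ δ)
        (nhdsWithin 0 (Ioi 0)) (nhds 0) := by
      have h2 := h0.neg
      simpa [neg_mul] using h2
    have h3 := (h1.const_mul α).const_mul (Real.sqrt R)
    simpa using h3
  apply squeeze_zero_norm' _ htend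
  filter_upwards [Ioo_mem_nhdsGT_of_mem (Set.left_mem_Ico.mpr one_pos)] with t ht
  exact key t ht
end
end

section
/- Let φ : [0,1] → [0,1] be a C¹ bijection with φ(0) = 0, φ(1) = 1 and φ'(θ) > 0 for all θ ∈ [0,1], and suppose there exists g ∈ L²((0,1),ℝ) such that φ'(x) = φ'(0) + ∫₀ˣ g(u) du for all x ∈ [0,1] (i.e., φ is an H²-diffeomorphism). Then the inverse ψ := φ⁻¹ is a C¹ bijection of [0,1] with ψ(0) = 0, ψ(1) = 1 and ψ' > 0 everywhere, and there exists h ∈ L²((0,1),ℝ) such that ψ'(x) = ψ'(0) + ∫₀ˣ h(u) du for all x ∈ [0,1]; moreover h(x) = −g(φ⁻¹(x))/(φ'(φ⁻¹(x)))³ for almost every x ∈ (0,1). In particular, the inverse of an H²-diffeomorphism of [0,1] is again an H²-diffeomorphism. -/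
open MeasureTheory Set Filter
open Topology

noncomputable section

lemma aux_div_pow {g Φ : ℝ → ℝ} {m : ℝ} (hg : IntervalIntegrable g volume 0 1)
    (hΦc : ContinuousOn Φ (Icc (0:ℝ) 1)) (hm0 : 0 < m) (hm : ∀ t ∈ Icc (0:ℝ) 1, m ≤ Φ t)
    (k : ℕ) : IntervalIntegrable (fun t => g t / (Φ t) ^ k) volume 0 1 := by
  rw [intervalIntegrable_iff_integrableOn_Ioc_of_le zero_le_one]
  have hgi : IntegrableOn g (Ioc (0:ℝ) 1) := by
    rwa [intervalIntegrable_iff_integrableOn_Ioc_of_le zero_le_one] at hg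
  have hΦm : AEStronglyMeasurable (fun t => (Φ t) ^ k) (volume.restrict (Ioc (0:ℝ) 1)) :=
    ((hΦc.mono Ioc_subset_Icc_self).pow k).aestronglyMeasurable measurableSet_Ioc
  refine Integrable.mono' (g := fun t => |g t| / m ^ k) ((hgi.abs).div_const (m ^ k)) ((hgi.aemeasurable.div hΦm.aemeasurable).aestronglyMeasurable) ?_
  refine (ae_restrict_iff' measurableSet_Ioc).2 (Filter.Eventually.of_forall fun t ht => ?_)
  have htI : t ∈ Icc (0:ℝ) 1 := Ioc_subset_Icc_self ht
  have h1 : m ≤ Φ t := hm t htI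
  have h2 : (0:ℝ) < Φ t := lt_of_lt_of_le hm0 h1
  rw [Real.norm_eq_abs, abs_div, abs_pow, abs_of_pos h2]
  have hk : m ^ k ≤ (Φ t) ^ k := pow_le_pow_left₀ hm0.le h1 k
  exact div_le_div_of_nonneg_left (abs_nonneg _) (pow_pos hm0 k) hk

lemma key_identity {g Φ : ℝ → ℝ} {m M : ℝ} (hgInt : IntervalIntegrable g volume 0 1)
    (hm0 : 0 < m)
    (hΦ : ∀ t ∈ Icc (0:ℝ) 1, Φ t = Φ 0 + ∫ u in (0:ℝ)..t, g u)
    (hlb : ∀ t ∈ Icc (0:ℝ) 1, m ≤ Φ t) (hub : ∀ t ∈ Icc (0:ℝ) 1, Φ t ≤ M) :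
    ∀ s ∈ Icc (0:ℝ) 1, ∫ t in (0:ℝ)..s, g t / (Φ t) ^ 2 = (Φ 0)⁻¹ - (Φ s)⁻¹ := by
  have h01 : (0:ℝ) ∈ Icc (0:ℝ) 1 := left_mem_Icc.2 zero_le_one
  have hΦc : ContinuousOn Φ (Icc (0:ℝ) 1) := by
    have h2 : ContinuousOn (fun t => Φ 0 + ∫ u in (0:ℝ)..t, g u) (Icc (0:ℝ) 1) := by
      have := intervalIntegral.continuousOn_primitive_interval' (a := 0) (b₁ := 0) (b₂ := 1)
        hgInt (by rw [uIcc_of_le zero_le_one]; exact h01)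
      rw [uIcc_of_le zero_le_one] at this
      exact continuousOn_const.add this
    exact h2.congr hΦ
  have habs : IntervalIntegrable (fun u => |g u|) volume 0 1 := hgInt.abs
  set Λ : ℝ → ℝ := fun t => ∫ u in (0:ℝ)..t, |g u| with hΛdef
  have hΛc : ContinuousOn Λ (Icc (0:ℝ) 1) := by
    have := intervalIntegral.continuousOn_primitive_interval' (a := 0) (b₁ := 0) (b₂ := 1)
      habs (by rw [uIcc_of_le zero_le_one]; exact h01)
    rwa [uIcc_of_le zero_le_one] at this
  have hsub : ∀ {f : ℝ → ℝ}, IntervalIntegrable f volume 0 1 → ∀ a ∈ Icc (0:ℝ) 1,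
      ∀ b ∈ Icc (0:ℝ) 1, IntervalIntegrable f volume a b := by
    intro f hf a ha b hb
    refine hf.mono_set ?_
    have h1 : a ∈ uIcc (0:ℝ) 1 := by rw [uIcc_of_le zero_le_one]; exact ha
    have h2 : b ∈ uIcc (0:ℝ) 1 := by rw [uIcc_of_le zero_le_one]; exact hb
    exact uIcc_subset_uIcc h1 h2
  have hq : IntervalIntegrable (fun t => g t / (Φ t) ^ 2) volume 0 1 :=
    aux_div_pow hgInt hΦc hm0 hlb 2
  set J : ℝ → ℝ := fun s => ∫ t in (0:ℝ)..s, g t / (Φ t) ^ 2 with hJdef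
  set E : ℝ → ℝ := fun s => J s - ((Φ 0)⁻¹ - (Φ s)⁻¹) with hEdef
  have hmM : m ≤ M := le_trans (hlb 0 h01) (hub 0 h01)
  have hM0 : (0:ℝ) < M := lt_of_lt_of_le hm0 hmM
  set C : ℝ := M / m ^ 4 with hCdef
  have hC0 : 0 < C := div_pos hM0 (pow_pos hm0 4)
  have hΛmono : ∀ a ∈ Icc (0:ℝ) 1, ∀ s ∈ Icc (0:ℝ) 1, Λ s - Λ a = ∫ t in a..s, |g t| :=
    fun a ha s hs => intervalIntegral.integral_interval_sub_left (hsub habs 0 h01 s hs)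
      (hsub habs 0 h01 a ha)
  have hΛnonneg : ∀ a ∈ Icc (0:ℝ) 1, ∀ s ∈ Icc (0:ℝ) 1, a ≤ s → 0 ≤ Λ s - Λ a := by
    intro a ha s hs has
    rw [hΛmono a ha s hs]
    exact intervalIntegral.integral_nonneg has (fun t _ => abs_nonneg _)
  have hΦsub : ∀ a ∈ Icc (0:ℝ) 1, ∀ s ∈ Icc (0:ℝ) 1, Φ s - Φ a = ∫ t in a..s, g t := by
    intro a ha s hs
    have h3 := intervalIntegral.integral_interval_sub_left (hsub hgInt 0 h01 s hs)
      (hsub hgInt 0 h01 a ha)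
    rw [hΦ a ha, hΦ s hs]
    linarith [h3]
  have hΦabs : ∀ a ∈ Icc (0:ℝ) 1, ∀ s ∈ Icc (0:ℝ) 1, a ≤ s → |Φ s - Φ a| ≤ Λ s - Λ a := by
    intro a ha s hs has
    rw [hΦsub a ha s hs, hΛmono a ha s hs]
    exact intervalIntegral.abs_integral_le_integral_abs has
  -- the key quadratic estimate
  have hEkey : ∀ a ∈ Icc (0:ℝ) 1, ∀ s ∈ Icc (0:ℝ) 1, a ≤ s →
      |E s - E a| ≤ C * (Λ s - Λ a) ^ 2 := by
    intro a ha s hs has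
    have hJdiff : J s - J a = ∫ t in a..s, g t / (Φ t) ^ 2 :=
      intervalIntegral.integral_interval_sub_left (hsub hq 0 h01 s hs) (hsub hq 0 h01 a ha)
    have hΦa := hlb a ha; have hΦs := hlb s hs
    have hΦapos : (0:ℝ) < Φ a := lt_of_lt_of_le hm0 hΦa
    have hΦspos : (0:ℝ) < Φ s := lt_of_lt_of_le hm0 hΦs
    have hinv : (Φ a)⁻¹ - (Φ s)⁻¹ = ∫ t in a..s, g t / (Φ a * Φ s) := by
      rw [intervalIntegral.integral_div, ← hΦsub a ha s hs]
      field_simp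
    have hEform : E s - E a = ∫ t in a..s, (g t / (Φ t) ^ 2 - g t / (Φ a * Φ s)) := by
      rw [intervalIntegral.integral_sub (hsub hq a ha s hs)
        ((hsub hgInt a ha s hs).div_const (Φ a * Φ s)), ← hJdiff, ← hinv]
      simp only [hEdef]
      ring
    rw [hEform]
    have hbd := intervalIntegral.norm_integral_le_abs_of_norm_le
      (f := fun t => g t / (Φ t) ^ 2 - g t / (Φ a * Φ s))
      (g := fun t => |g t| * (M * (Λ s - Λ a) / m ^ 4)) (μ := volume) (a := a) (b := s)
      ?_ ((hsub habs a ha s hs).mul_const _)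
    · rw [Real.norm_eq_abs] at hbd
      refine hbd.trans ?_
      rw [intervalIntegral.integral_mul_const, ← hΛmono a ha s hs]
      have hnn : 0 ≤ Λ s - Λ a := hΛnonneg a ha s hs has
      rw [abs_of_nonneg (by positivity)]
      rw [hCdef]; ring_nf; rfl
    · rw [uIoc_of_le has]
      refine (ae_restrict_iff' measurableSet_Ioc).2 (Filter.Eventually.of_forall fun t ht => ?_)
      have htI : t ∈ Icc (0:ℝ) 1 := ⟨le_trans ha.1 ht.1.le, le_trans ht.2 hs.2⟩
      have hat : a ≤ t := ht.1.le
      have hts : t ≤ s := ht.2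
      have hΦt := hlb t htI
      have hΦtpos : (0:ℝ) < Φ t := lt_of_lt_of_le hm0 hΦt
      have e1 : g t / (Φ t) ^ 2 - g t / (Φ a * Φ s) =
          g t * ((Φ a * Φ s - (Φ t) ^ 2) / ((Φ t) ^ 2 * (Φ a * Φ s))) := by
        field_simp
      show ‖g t / (Φ t) ^ 2 - g t / (Φ a * Φ s)‖ ≤ |g t| * (M * (Λ s - Λ a) / m ^ 4)
      rw [Real.norm_eq_abs, e1, abs_mul]
      have hnum : |Φ a * Φ s - (Φ t) ^ 2| ≤ M * (Λ s - Λ a) := by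
        have e2 : Φ a * Φ s - (Φ t) ^ 2 = Φ a * (Φ s - Φ t) + Φ t * (Φ a - Φ t) := by ring
        have h4 : |Φ s - Φ t| ≤ Λ s - Λ t := hΦabs t htI s hs hts
        have h5 : |Φ a - Φ t| ≤ Λ t - Λ a := by
          rw [abs_sub_comm]; exact hΦabs a ha t htI hat
        have hMa : |Φ a| ≤ M := by rw [abs_of_pos hΦapos]; exact hub a ha
        have hMt : |Φ t| ≤ M := by rw [abs_of_pos hΦtpos]; exact hub t htI
        calc |Φ a * Φ s - (Φ t) ^ 2| ≤ |Φ a| * |Φ s - Φ t| + |Φ t| * |Φ a - Φ t| := by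
              rw [e2]; exact (abs_add_le _ _).trans (by rw [abs_mul, abs_mul])
          _ ≤ M * (Λ s - Λ t) + M * (Λ t - Λ a) := by
              have n1 : 0 ≤ Λ s - Λ t := hΛnonneg t htI s hs hts
              have n2 : 0 ≤ Λ t - Λ a := hΛnonneg a ha t htI hat
              have := abs_nonneg (Φ s - Φ t); have := abs_nonneg (Φ a - Φ t)
              nlinarith [abs_nonneg (Φ a), abs_nonneg (Φ t)]
          _ = M * (Λ s - Λ a) := by ring
      have hden : m ^ 4 ≤ (Φ t) ^ 2 * (Φ a * Φ s) := by
        have d1 : m ^ 2 ≤ (Φ t) ^ 2 := pow_le_pow_left₀ hm0.le hΦt 2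
        have d2 : m * m ≤ Φ a * Φ s := mul_le_mul hΦa hΦs hm0.le (le_trans hm0.le hΦa)
        calc m ^ 4 = m ^ 2 * (m * m) := by ring
          _ ≤ (Φ t) ^ 2 * (Φ a * Φ s) := mul_le_mul d1 d2 (by positivity) (by positivity)
      have hdenpos : (0:ℝ) < (Φ t) ^ 2 * (Φ a * Φ s) := by positivity
      rw [abs_div, abs_of_pos hdenpos]
      have : |Φ a * Φ s - (Φ t) ^ 2| / ((Φ t) ^ 2 * (Φ a * Φ s)) ≤ M * (Λ s - Λ a) / m ^ 4 :=
        div_le_div₀ (mul_nonneg hM0.le (hΛnonneg a ha s hs has)) hnum (pow_pos hm0 4) hden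
      exact mul_le_mul_of_nonneg_left this (abs_nonneg _)
  -- E vanishes
  have hE0 : E 0 = 0 := by simp [hEdef, hJdef]
  have hΛ0 : Λ 0 = 0 := by simp [hΛdef]
  have hEzero : ∀ s ∈ Icc (0:ℝ) 1, E s = 0 := by
    intro s hs
    have hH : ∀ ε > (0:ℝ), |E s| ≤ C * ε * Λ 1 := by
      intro ε hε
      obtain ⟨δ, hδ0, hδ⟩ := (Metric.uniformContinuousOn_iff.1
        (isCompact_Icc.uniformContinuousOn_of_continuous hΛc)) ε hε
      have claim : ∀ k : ℕ, ∀ x ∈ Icc (0:ℝ) 1, x ≤ k * (δ / 2) → |E x| ≤ C * ε * Λ x := by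
        intro k
        induction k with
        | zero =>
          intro x hx hxk
          have : x = 0 := le_antisymm (by simpa using hxk) hx.1
          rw [this, hE0, hΛ0]
          simp
        | succ k ih =>
          intro x hx hxk
          set a : ℝ := max (x - δ / 2) 0 with hadef
          have ha1 : a ≤ x := max_le (by linarith) hx.1
          have haI : a ∈ Icc (0:ℝ) 1 := ⟨le_max_right _ _, le_trans ha1 hx.2⟩
          have hak : a ≤ k * (δ / 2) := by
            refine max_le ?_ (by positivity)
            push_cast at hxk ⊢
            linarith
          have hIH := ih a haI hak
          have hxa : x - a ≤ δ / 2 := by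
            have : x - δ / 2 ≤ a := le_max_left _ _
            linarith
          have hdist : dist (Λ x) (Λ a) < ε := by
            apply hδ x hx a haI
            rw [Real.dist_eq, abs_of_nonneg (by linarith)]
            linarith
          have hΛd : Λ x - Λ a ≤ ε := by
            have : |Λ x - Λ a| < ε := by rwa [Real.dist_eq] at hdist
            exact le_of_lt (lt_of_le_of_lt (le_abs_self _) this)
          have hΛdn : 0 ≤ Λ x - Λ a := hΛnonneg a haI x hx ha1
          have hkey := hEkey a haI x hx ha1
          have htri : |E x| ≤ |E a| + |E x - E a| := by
            calc |E x| = |E a + (E x - E a)| := by ring_nf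
              _ ≤ |E a| + |E x - E a| := abs_add_le _ _
          have hCe : C * (Λ x - Λ a) ^ 2 ≤ C * ε * (Λ x - Λ a) := by
            nlinarith [mul_nonneg (mul_nonneg hC0.le hΛdn) (sub_nonneg.2 hΛd)]
          calc |E x| ≤ |E a| + |E x - E a| := htri
            _ ≤ C * ε * Λ a + C * (Λ x - Λ a) ^ 2 := add_le_add hIH hkey
            _ ≤ C * ε * Λ a + C * ε * (Λ x - Λ a) := by linarith
            _ = C * ε * Λ x := by ring
      obtain ⟨n, hn⟩ := exists_nat_ge (1 / (δ / 2))
      have hn2 : (1:ℝ) ≤ n * (δ / 2) := by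
        rw [div_le_iff₀ (by linarith)] at hn
        linarith
      have h1I : (1:ℝ) ∈ Icc (0:ℝ) 1 := right_mem_Icc.2 zero_le_one
      have := claim n s hs (le_trans hs.2 hn2)
      refine this.trans ?_
      have hΛs1 : Λ s ≤ Λ 1 := by
        have := hΛnonneg s hs 1 h1I hs.2
        linarith
      exact mul_le_mul_of_nonneg_left hΛs1 (by positivity)
    by_contra hne
    have hpos : 0 < |E s| := abs_pos.2 hne
    have hΛ1nn : 0 ≤ Λ 1 := by
      have := hΛnonneg 0 h01 1 (right_mem_Icc.2 zero_le_one) zero_le_one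
      linarith [hΛ0]
    have := hH (|E s| / (2 * (C * Λ 1 + 1))) (by positivity)
    have hlt : C * (|E s| / (2 * (C * Λ 1 + 1))) * Λ 1 < |E s| := by
      have h7 : C * (|E s| / (2 * (C * Λ 1 + 1))) * Λ 1
          = |E s| * ((C * Λ 1) / (2 * (C * Λ 1 + 1))) := by ring
      have h8 : (C * Λ 1) / (2 * (C * Λ 1 + 1)) < 1 := by
        rw [div_lt_one (by positivity)]
        nlinarith
      calc C * (|E s| / (2 * (C * Λ 1 + 1))) * Λ 1
          = |E s| * ((C * Λ 1) / (2 * (C * Λ 1 + 1))) := h7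
        _ < |E s| * 1 := by
            apply mul_lt_mul_of_pos_left h8 hpos
        _ = |E s| := mul_one _
    linarith [this.trans_lt (by exact hlt)]
  intro s hs
  have := hEzero s hs
  simp only [hEdef, hJdef] at this
  linarith [this]

set_option maxHeartbeats 1000000 in
/-- The inverse of an `H²`-diffeomorphism of `[0,1]` (a `C¹` bijection
fixing the endpoints, with positive derivative whose derivative is the primitive of an `L²`
function `g`) is again an `H²`-diffeomorphism, and its weak second derivative is
`h(x) = −g(φ⁻¹(x))/(φ'(φ⁻¹(x)))³` almost everywhere on `(0,1)`. -/
theorem statement_16 (φ : ℝ → ℝ)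
    (hφ1 : ContDiffOn ℝ 1 φ (Icc (0:ℝ) 1))
    (hφbij : BijOn φ (Icc (0:ℝ) 1) (Icc (0:ℝ) 1))
    (hφ0 : φ 0 = 0) (hφend : φ 1 = 1)
    (hφ' : ∀ θ ∈ Icc (0:ℝ) 1, 0 < deriv φ θ)
    (g : ℝ → ℝ)
    (hgInt : IntervalIntegrable g volume 0 1)
    (hgL2 : IntervalIntegrable (fun u => (g u) ^ 2) volume 0 1)
    (hg : ∀ x ∈ Icc (0:ℝ) 1, deriv φ x = deriv φ 0 + ∫ u in (0:ℝ)..x, g u) :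
    ∃ ψ : ℝ → ℝ,
      InvOn ψ φ (Icc (0:ℝ) 1) (Icc (0:ℝ) 1) ∧
      BijOn ψ (Icc (0:ℝ) 1) (Icc (0:ℝ) 1) ∧
      ContDiffOn ℝ 1 ψ (Icc (0:ℝ) 1) ∧
      ψ 0 = 0 ∧ ψ 1 = 1 ∧
      (∀ x ∈ Icc (0:ℝ) 1, 0 < deriv ψ x) ∧
      ∃ h : ℝ → ℝ,
        IntervalIntegrable h volume 0 1 ∧
        IntervalIntegrable (fun u => (h u) ^ 2) volume 0 1 ∧
        (∀ x ∈ Icc (0:ℝ) 1, deriv ψ x = deriv ψ 0 + ∫ u in (0:ℝ)..x, h u) ∧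
        (∀ᵐ x ∂(volume.restrict (Ioo (0:ℝ) 1)),
          h x = -(g (ψ x)) / (deriv φ (ψ x)) ^ 3) := by
  have h01 : (0:ℝ) ∈ Icc (0:ℝ) 1 := left_mem_Icc.2 zero_le_one
  have h11 : (1:ℝ) ∈ Icc (0:ℝ) 1 := right_mem_Icc.2 zero_le_one
  -- continuity of the derivative
  have hΦc : ContinuousOn (deriv φ) (Icc (0:ℝ) 1) := by
    have h2 : ContinuousOn (fun t => deriv φ 0 + ∫ u in (0:ℝ)..t, g u) (Icc (0:ℝ) 1) := by
      have := intervalIntegral.continuousOn_primitive_interval' (a := 0) (b₁ := 0) (b₂ := 1)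
        hgInt (by rw [uIcc_of_le zero_le_one]; exact h01)
      rw [uIcc_of_le zero_le_one] at this
      exact continuousOn_const.add this
    exact h2.congr hg
  -- min and max of the derivative
  obtain ⟨xm, hxmI, hxm⟩ := isCompact_Icc.exists_isMinOn ⟨0, h01⟩ hΦc
  obtain ⟨xM, hxMI, hxM⟩ := isCompact_Icc.exists_isMaxOn ⟨0, h01⟩ hΦc
  set m := deriv φ xm with hmdef
  set M := deriv φ xM with hMdef
  have hm0 : 0 < m := hφ' xm hxmI
  have hlb : ∀ t ∈ Icc (0:ℝ) 1, m ≤ deriv φ t := fun t ht => isMinOn_iff.1 hxm t ht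
  have hub : ∀ t ∈ Icc (0:ℝ) 1, deriv φ t ≤ M := fun t ht => isMaxOn_iff.1 hxM t ht
  -- monotonicity and differentiability of φ
  have hmono : StrictMonoOn φ (Icc (0:ℝ) 1) := by
    refine strictMonoOn_of_deriv_pos (convex_Icc 0 1) hφ1.continuousOn fun x hx => ?_
    rw [interior_Icc] at hx
    exact hφ' x (Ioo_subset_Icc_self hx)
  have hD : ∀ x ∈ Icc (0:ℝ) 1, HasDerivAt φ (deriv φ x) x := by
    intro x hx
    have hne : deriv φ x ≠ 0 := (hφ' x hx).ne'
    by_cases hdiff : DifferentiableAt ℝ φ x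
    · exact hdiff.hasDerivAt
    · exact absurd (deriv_zero_of_not_differentiableAt hdiff) hne
  -- the inverse function
  set ψ₀ : ℝ → ℝ := Function.invFunOn φ (Icc (0:ℝ) 1) with hψ₀def
  have hinv0 : InvOn ψ₀ φ (Icc (0:ℝ) 1) (Icc (0:ℝ) 1) := hφbij.invOn_invFunOn
  have hmaps0 : MapsTo ψ₀ (Icc (0:ℝ) 1) (Icc (0:ℝ) 1) := hφbij.surjOn.mapsTo_invFunOn
  have hψ00 : ψ₀ 0 = 0 := by have := hinv0.1 h01; rwa [hφ0] at this
  have hψ01 : ψ₀ 1 = 1 := by have := hinv0.1 h11; rwa [hφend] at this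
  set c0 := deriv φ 0 with hc0def
  set c1 := deriv φ 1 with hc1def
  have hc0pos : 0 < c0 := hφ' 0 h01
  have hc1pos : 0 < c1 := hφ' 1 h11
  set ψ : ℝ → ℝ := fun y => if y < 0 then y / c0 else if 1 < y then 1 + (y - 1) / c1 else ψ₀ y
    with hψdef
  have hψeq : ∀ y ∈ Icc (0:ℝ) 1, ψ y = ψ₀ y := by
    intro y hy
    simp only [hψdef, if_neg (not_lt.2 hy.1), if_neg (not_lt.2 hy.2)]
  have hinv : InvOn ψ φ (Icc (0:ℝ) 1) (Icc (0:ℝ) 1) := by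
    constructor
    · intro x hx
      rw [hψeq (φ x) (hφbij.mapsTo hx)]
      exact hinv0.1 hx
    · intro y hy
      rw [hψeq y hy]
      exact hinv0.2 hy
  have hψmaps : MapsTo ψ (Icc (0:ℝ) 1) (Icc (0:ℝ) 1) := by
    intro y hy; rw [hψeq y hy]; exact hmaps0 hy
  have hψbij : BijOn ψ (Icc (0:ℝ) 1) (Icc (0:ℝ) 1) := hinv.symm.bijOn hψmaps hφbij.mapsTo
  have hψ0 : ψ 0 = 0 := (hψeq 0 h01).trans hψ00
  have hψ1 : ψ 1 = 1 := (hψeq 1 h11).trans hψ01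
  -- continuity of ψ on [0,1]
  haveI : CompactSpace (Icc (0:ℝ) 1) := isCompact_iff_compactSpace.mp isCompact_Icc
  have hψcont : ContinuousOn ψ (Icc (0:ℝ) 1) := by
    have hrc : Continuous ((Icc (0:ℝ) 1).restrict φ) :=
      continuousOn_iff_continuous_restrict.mp hφ1.continuousOn
    set e : (Icc (0:ℝ) 1) ≃ (Icc (0:ℝ) 1) := Set.BijOn.equiv φ hφbij with hedef
    have hecont : Continuous (e : (Icc (0:ℝ) 1) → (Icc (0:ℝ) 1)) := by
      show Continuous fun x : (Icc (0:ℝ) 1) => e x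
      have : (fun x : (Icc (0:ℝ) 1) => e x)
          = fun x => ⟨φ x, hφbij.mapsTo x.2⟩ := rfl
      rw [this]
      exact hrc.subtype_mk _
    set homeo := Continuous.homeoOfEquivCompactToT2 (f := e) hecont with hhdef
    have hsymm : Continuous fun y : (Icc (0:ℝ) 1) => ((e.symm y : ℝ)) :=
      continuous_subtype_val.comp homeo.symm.continuous
    refine ContinuousOn.congr (g := ψ) (f := fun y => if hy : y ∈ Icc (0:ℝ) 1
      then (e.symm ⟨y, hy⟩ : ℝ) else 0) ?_ ?_
    · rw [continuousOn_iff_continuous_restrict]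
      have : (Icc (0:ℝ) 1).restrict (fun y => if hy : y ∈ Icc (0:ℝ) 1
          then (e.symm ⟨y, hy⟩ : ℝ) else 0) = fun y : (Icc (0:ℝ) 1) => (e.symm y : ℝ) := by
        funext y
        simp [Set.restrict, y.2.1, y.2.2]
      convert hsymm using 1
      exact this
    · intro y hy
      rw [hψeq y hy]
      simp only [dif_pos hy]
      -- ψ₀ y = e.symm ⟨y, hy⟩
      refine hφbij.injOn (hmaps0 hy) (e.symm ⟨y, hy⟩).2 ?_
      have h5 : φ ((e.symm ⟨y, hy⟩ : ℝ)) = (e (e.symm ⟨y, hy⟩) : ℝ) := rfl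
      rw [hinv0.2 hy, h5, Equiv.apply_symm_apply]
  -- ψ maps the open interval into itself
  have hψIoo : MapsTo ψ (Ioo (0:ℝ) 1) (Ioo (0:ℝ) 1) := by
    intro y hy
    have hyI : y ∈ Icc (0:ℝ) 1 := Ioo_subset_Icc_self hy
    have h6 : ψ y ∈ Icc (0:ℝ) 1 := hψmaps hyI
    have hne0 : ψ y ≠ 0 := by
      intro hh
      have : φ (ψ y) = φ 0 := by rw [hh]
      rw [hinv.2 hyI, hφ0] at this
      exact hy.1.ne' this
    have hne1 : ψ y ≠ 1 := by
      intro hh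
      have : φ (ψ y) = φ 1 := by rw [hh]
      rw [hinv.2 hyI, hφend] at this
      exact hy.2.ne this
    exact ⟨lt_of_le_of_ne h6.1 (Ne.symm hne0), lt_of_le_of_ne h6.2 hne1⟩
  -- derivative of ψ at every point of [0,1]
  have hDψ : ∀ y ∈ Icc (0:ℝ) 1, HasDerivAt ψ ((deriv φ (ψ y))⁻¹) y := by
    intro y hy
    rcases eq_or_lt_of_le hy.1 with hy0 | hy0
    · -- y = 0
      subst hy0
      rw [hψ0]
      -- left part: linear
      have hlin : HasDerivWithinAt ψ c0⁻¹ (Iio (0:ℝ)) 0 := by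
        have hl : HasDerivAt (fun z : ℝ => z / c0) c0⁻¹ 0 := by
          simpa [one_div] using (hasDerivAt_id (0:ℝ)).div_const c0
        refine hl.hasDerivWithinAt.congr (fun z hz => ?_) (by simp [hψ0])
        simp only [hψdef, if_pos (mem_Iio.1 hz)]
      -- right part: slope argument
      have hslope : HasDerivWithinAt ψ c0⁻¹ (Ici (0:ℝ)) 0 := by
        rw [hasDerivWithinAt_iff_tendsto_slope, Ici_sdiff_left,
          ← nhdsWithin_Ioo_eq_nhdsGT (zero_lt_one (α := ℝ))]
        have t1 : Tendsto ψ (𝓝[Ioo (0:ℝ) 1] 0) (𝓝[Ioo (0:ℝ) 1] 0) := by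
          rw [tendsto_nhdsWithin_iff]
          constructor
          · have := (hψcont 0 h01).tendsto
            rw [hψ0] at this
            exact this.mono_left (nhdsWithin_mono 0 Ioo_subset_Icc_self)
          · exact eventually_mem_nhdsWithin.mono fun z hz => hψIoo hz
        have t2 : Tendsto (slope φ 0) (𝓝[Ioo (0:ℝ) 1] 0) (𝓝 c0) := by
          have := hasDerivAt_iff_tendsto_slope.1 (hD 0 h01)
          exact this.mono_left (nhdsWithin_mono 0 (fun z hz => ne_of_gt hz.1))
        have t3 : Tendsto (fun z => (slope φ 0 (ψ z))⁻¹) (𝓝[Ioo (0:ℝ) 1] 0) (𝓝 c0⁻¹) :=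
          (t2.comp t1).inv₀ hc0pos.ne'
        refine t3.congr' ?_
        filter_upwards [self_mem_nhdsWithin] with z hz
        have hzI : z ∈ Icc (0:ℝ) 1 := Ioo_subset_Icc_self hz
        have hψz : ψ z ∈ Ioo (0:ℝ) 1 := hψIoo hz
        rw [slope_def_field, slope_def_field, hinv.2 hzI, hφ0, hψ0, sub_zero, sub_zero, inv_div]
      have := (hlin.union hslope)
      rw [Iio_union_Ici] at this
      exact hasDerivWithinAt_univ.1 this
    rcases eq_or_lt_of_le hy.2 with hy1 | hy1
    · -- y = 1
      subst hy1
      rw [hψ1]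
      have hlin : HasDerivWithinAt ψ c1⁻¹ (Ioi (1:ℝ)) 1 := by
        have hl : HasDerivAt (fun z : ℝ => 1 + (z - 1) / c1) c1⁻¹ 1 := by
          simpa [one_div] using (((hasDerivAt_id (1:ℝ)).sub_const 1).div_const c1).const_add 1
        refine hl.hasDerivWithinAt.congr (fun z hz => ?_) (by simp [hψ1])
        have hz1 : (1:ℝ) < z := mem_Ioi.1 hz
        simp only [hψdef, if_neg (not_lt.2 (by linarith : (0:ℝ) ≤ z)), if_pos hz1]
      have hslope : HasDerivWithinAt ψ c1⁻¹ (Iic (1:ℝ)) 1 := by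
        rw [hasDerivWithinAt_iff_tendsto_slope, Iic_diff_right,
          ← nhdsWithin_Ioo_eq_nhdsLT (zero_lt_one (α := ℝ))]
        have t1 : Tendsto ψ (𝓝[Ioo (0:ℝ) 1] 1) (𝓝[Ioo (0:ℝ) 1] 1) := by
          rw [tendsto_nhdsWithin_iff]
          constructor
          · have := (hψcont 1 h11).tendsto
            rw [hψ1] at this
            exact this.mono_left (nhdsWithin_mono 1 Ioo_subset_Icc_self)
          · exact eventually_mem_nhdsWithin.mono fun z hz => hψIoo hz
        have t2 : Tendsto (slope φ 1) (𝓝[Ioo (0:ℝ) 1] 1) (𝓝 c1) := by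
          have := hasDerivAt_iff_tendsto_slope.1 (hD 1 h11)
          exact this.mono_left (nhdsWithin_mono 1 (fun z hz => ne_of_lt hz.2))
        have t3 : Tendsto (fun z => (slope φ 1 (ψ z))⁻¹) (𝓝[Ioo (0:ℝ) 1] 1) (𝓝 c1⁻¹) :=
          (t2.comp t1).inv₀ hc1pos.ne'
        refine t3.congr' ?_
        filter_upwards [self_mem_nhdsWithin] with z hz
        have hzI : z ∈ Icc (0:ℝ) 1 := Ioo_subset_Icc_self hz
        rw [slope_def_field, slope_def_field, hinv.2 hzI, hφend, hψ1, inv_div]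
      have := (hslope.union hlin)
      rw [Iic_union_Ioi] at this
      exact hasDerivWithinAt_univ.1 this
    · -- interior point
      have hyO : y ∈ Ioo (0:ℝ) 1 := ⟨hy0, hy1⟩
      have hψyI : ψ y ∈ Icc (0:ℝ) 1 := hψmaps hy
      refine HasDerivAt.of_local_left_inverse
        (hψcont.continuousAt (Icc_mem_nhds hy0 hy1)) (hD (ψ y) hψyI) (hφ' (ψ y) hψyI).ne' ?_
      filter_upwards [Ioo_mem_nhds hy0 hy1] with z hz
      exact hinv.2 (Ioo_subset_Icc_self hz)
  have hderiv : ∀ y ∈ Icc (0:ℝ) 1, deriv ψ y = (deriv φ (ψ y))⁻¹ :=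
    fun y hy => (hDψ y hy).deriv
  have hψpos : ∀ y ∈ Icc (0:ℝ) 1, 0 < deriv ψ y := by
    intro y hy
    rw [hderiv y hy]
    exact inv_pos.2 (hφ' (ψ y) (hψmaps hy))
  -- smoothness of ψ
  have huni : UniqueDiffOn ℝ (Icc (0:ℝ) 1) := uniqueDiffOn_Icc zero_lt_one
  have hψCD : ContDiffOn ℝ 1 ψ (Icc (0:ℝ) 1) := by
    have e01 : (1 : WithTop ℕ∞) = 0 + 1 := by norm_num
    rw [e01, contDiffOn_succ_iff_derivWithin huni]
    refine ⟨fun y hy => ((hDψ y hy).differentiableAt).differentiableWithinAt, ?_, ?_⟩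
    · intro hω; simp at hω
    · rw [contDiffOn_zero]
      refine ContinuousOn.congr (f := fun y => (deriv φ (ψ y))⁻¹)
        ((hΦc.comp hψcont hψmaps).inv₀ fun y hy => (hφ' (ψ y) (hψmaps hy)).ne') ?_
      intro y hy
      rw [(hDψ y hy).hasDerivWithinAt.derivWithin (huni y hy)]
  -- image of Ioc under φ
  have hIocImg : ∀ b ∈ Icc (0:ℝ) 1, φ '' (Ioc 0 b) = Ioc 0 (φ b) := by
    intro b hb
    ext y
    constructor
    · rintro ⟨t, ht, rfl⟩
      have htI : t ∈ Icc (0:ℝ) 1 := ⟨ht.1.le, le_trans ht.2 hb.2⟩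
      constructor
      · have := hmono h01 htI ht.1
        rwa [hφ0] at this
      · exact hmono.monotoneOn htI hb ht.2
    · intro hy
      have hφbI : φ b ∈ Icc (0:ℝ) 1 := hφbij.mapsTo hb
      have hyI : y ∈ Icc (0:ℝ) 1 := ⟨hy.1.le, le_trans hy.2 hφbI.2⟩
      obtain ⟨t, htI, rfl⟩ := hφbij.surjOn hyI
      refine ⟨t, ⟨?_, ?_⟩, rfl⟩
      · rcases eq_or_lt_of_le htI.1 with h8 | h8
        · exfalso
          rw [← h8, hφ0] at hy
          exact lt_irrefl 0 hy.1
        · exact h8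
      · exact (hmono.le_iff_le htI hb).1 hy.2
  have hinjIoc : ∀ b ∈ Icc (0:ℝ) 1, InjOn φ (Ioc 0 b) := by
    intro b hb
    have hss : Ioc (0:ℝ) b ⊆ Icc (0:ℝ) 1 := fun t ht => ⟨ht.1.le, le_trans ht.2 hb.2⟩
    exact hφbij.injOn.mono hss
  have hderIoc : ∀ b ∈ Icc (0:ℝ) 1, ∀ t ∈ Ioc (0:ℝ) b,
      HasDerivWithinAt φ (deriv φ t) (Ioc (0:ℝ) b) t := fun b hb t ht =>
    (hD t ⟨ht.1.le, le_trans ht.2 hb.2⟩).hasDerivWithinAt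
  -- the weak second derivative of ψ
  set h : ℝ → ℝ := fun u => -(g (ψ u)) / (deriv φ (ψ u)) ^ 3 with hhdef2
  have hcomp : ∀ t ∈ Icc (0:ℝ) 1, |deriv φ t| • h (φ t) = -(g t) / (deriv φ t) ^ 2 := by
    intro t ht
    have h9 : ψ (φ t) = t := hinv.1 ht
    have h10 : (0:ℝ) < deriv φ t := hφ' t ht
    simp only [hhdef2, h9, smul_eq_mul, abs_of_pos h10]
    field_simp
  have hcomp2 : ∀ t ∈ Icc (0:ℝ) 1,
      |deriv φ t| • (h (φ t)) ^ 2 = (g t) ^ 2 / (deriv φ t) ^ 5 := by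
    intro t ht
    have h9 : ψ (φ t) = t := hinv.1 ht
    have h10 : (0:ℝ) < deriv φ t := hφ' t ht
    simp only [hhdef2, h9, smul_eq_mul, abs_of_pos h10]
    rw [div_pow, neg_sq]
    rw [← pow_mul]
    field_simp
    ring
  have hIoc11 : φ '' (Ioc 0 1) = Ioc 0 1 := by rw [hIocImg 1 h11, hφend]
  -- integrability of h
  have hIntH : IntervalIntegrable h volume 0 1 := by
    rw [intervalIntegrable_iff_integrableOn_Ioc_of_le zero_le_one, ← hIoc11,
      integrableOn_image_iff_integrableOn_abs_deriv_smul measurableSet_Ioc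
        (hderIoc 1 h11) (hinjIoc 1 h11) h]
    have hnice : IntervalIntegrable (fun t => -(g t) / (deriv φ t) ^ 2) volume 0 1 := by
      have := aux_div_pow hgInt.neg hΦc hm0 hlb 2
      simpa using this
    rw [intervalIntegrable_iff_integrableOn_Ioc_of_le zero_le_one] at hnice
    exact hnice.congr_fun (fun t ht => (hcomp t (Ioc_subset_Icc_self ht)).symm) measurableSet_Ioc
  have hIntH2 : IntervalIntegrable (fun u => (h u) ^ 2) volume 0 1 := by
    rw [intervalIntegrable_iff_integrableOn_Ioc_of_le zero_le_one, ← hIoc11,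
      integrableOn_image_iff_integrableOn_abs_deriv_smul measurableSet_Ioc
        (hderIoc 1 h11) (hinjIoc 1 h11) (fun u => (h u) ^ 2)]
    have hnice : IntervalIntegrable (fun t => (g t) ^ 2 / (deriv φ t) ^ 5) volume 0 1 :=
      aux_div_pow hgL2 hΦc hm0 hlb 5
    rw [intervalIntegrable_iff_integrableOn_Ioc_of_le zero_le_one] at hnice
    exact hnice.congr_fun (fun t ht => (hcomp2 t (Ioc_subset_Icc_self ht)).symm) measurableSet_Ioc
  -- the primitive identity
  have hkey := key_identity (Φ := deriv φ) hgInt hm0 hg hlb hub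
  have hprim : ∀ x ∈ Icc (0:ℝ) 1, deriv ψ x = deriv ψ 0 + ∫ u in (0:ℝ)..x, h u := by
    intro x hx
    have hsI : ψ x ∈ Icc (0:ℝ) 1 := hψmaps hx
    have hφs : φ (ψ x) = x := hinv.2 hx
    have hInt1 : ∫ u in (0:ℝ)..x, h u = ∫ t in (0:ℝ)..(ψ x), -(g t) / (deriv φ t) ^ 2 := by
      have himg2 : Ioc (0:ℝ) x = φ '' (Ioc 0 (ψ x)) := by rw [hIocImg (ψ x) hsI, hφs]
      rw [intervalIntegral.integral_of_le hx.1, intervalIntegral.integral_of_le hsI.1, himg2,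
        integral_image_eq_integral_abs_deriv_smul measurableSet_Ioc
          (hderIoc (ψ x) hsI) (hinjIoc (ψ x) hsI) h]
      exact setIntegral_congr_fun measurableSet_Ioc
        (fun t ht => hcomp t ⟨ht.1.le, le_trans ht.2 hsI.2⟩)
    have hInt2 : ∫ t in (0:ℝ)..(ψ x), -(g t) / (deriv φ t) ^ 2
        = -((deriv φ 0)⁻¹ - (deriv φ (ψ x))⁻¹) := by
      rw [← hkey (ψ x) hsI, ← intervalIntegral.integral_neg]
      congr 1
      funext t
      rw [neg_div]
    rw [hInt1, hInt2, hderiv x hx, hderiv 0 h01, hψ0]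
    ring
  -- the almost-everywhere identity
  have hae : ∀ᵐ x ∂(volume.restrict (Ioo (0:ℝ) 1)),
      h x = -(g (ψ x)) / (deriv φ (ψ x)) ^ 3 :=
    Filter.Eventually.of_forall fun x => rfl
  exact ⟨ψ, hinv, hψbij, hψCD, hψ0, hψ1, hψpos, h, hIntH, hIntH2, hprim, hae⟩
end
end
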